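/- arXiv:math/0004119 — 10 statements merged into one kernel-verified Lean document; each statement's English description precedes it below -/
import Mathlib

section
/- A topological group G is precompact (i.e., precompact with respect to its left uniformity) if and only if for every neighbourhood U of the identity there exists a finite set F ⊆ G such that FUF = G. -/
/-!
For the left uniformity, total boundedness says that `G = F * U` for a finite `F` and every
neighbourhood `U` of `1`, which gives `F * U * F = G` at once.

The converse is a Ramsey-type argument in the Stone–Čech semigroup `βG` of ultrafilters. Take `p`
in a minimal closed left ideal of `βG`, so that `p ∈ βG * (r * p)` for every `r`. If
`G = F * U * F`, one of the finitely many sets `a * U * b` with `a, b ∈ F` lies in `p`, and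
minimality makes `A * A⁻¹` left syndetic for every `A ∈ p`. For `A = a * U * b` this yields
`G = T * a * (U * U⁻¹)` with `T` finite, and `U * U⁻¹` is inside any given neighbourhood of `1`
once `U` is small enough.
-/

open Filter Set Pointwise Topology

attribute [local instance] Ultrafilter.mul Ultrafilter.semigroup

theorem exists_forall_exists_mul_mul_eq_of_compact_t2_of_continuous_mul_left {M : Type*}
    [Nonempty M] [Semigroup M] [TopologicalSpace M] [CompactSpace M] [T2Space M]
    (continuous_const_mul : ∀ r : M, Continuous (· * r)) :
    ∃ p : M, ∀ r : M, ∃ w : M, w * (r * p) = p := by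
  let S : Set (Set M) := {C | IsClosed C ∧ C.Nonempty ∧ ∀ q ∈ C, ∀ r : M, r * q ∈ C}
  obtain ⟨C, hC⟩ : ∃ C, Minimal (· ∈ S) C := by
    refine zorn_superset _ fun c hcS hchain => ?_
    refine ⟨⋂₀ c, ⟨isClosed_sInter fun C hC => (hcS hC).1, ?_,
      fun q hq r C hC => (hcS hC).2.2 q (hq C hC) r⟩, fun C hC => sInter_subset_of_mem hC⟩
    obtain rfl | hne := c.eq_empty_or_nonempty
    · simp
    have := hne.to_subtype
    exact IsCompact.nonempty_sInter_of_directed_nonempty_isCompact_isClosed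
      (IsChain.directedOn hchain.symm) (fun C hC => (hcS hC).2.1)
      (fun C hC => (hcS hC).1.isCompact) fun C hC => (hcS hC).1
  obtain ⟨-, ⟨p, hp⟩, hC_ideal⟩ := hC.prop
  refine ⟨p, fun r => ?_⟩
  -- The left ideal generated by `r * p` is closed and contained in `C`, hence equal to it.
  have hrange : range (· * (r * p)) = C := by
    refine hC.eq_of_subset ⟨(isCompact_range (continuous_const_mul _)).isClosed,
      range_nonempty _, ?_⟩ ?_
    · rintro _ ⟨w, rfl⟩ r'
      exact ⟨r' * w, mul_assoc _ _ _⟩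
    · rintro _ ⟨w, rfl⟩
      exact hC_ideal _ (hC_ideal p hp r) w
  rw [← hrange] at hp
  exact hp

theorem Ultrafilter.exists_finite_forall_preimage_mul_mem {M : Type*} [Semigroup M]
    {p : Ultrafilter M} (hp : ∀ r : Ultrafilter M, ∃ w, w * (r * p) = p) {A : Set M}
    (hA : A ∈ p) : ∃ T : Set M, T.Finite ∧ ∀ x, ∃ t ∈ T, (t * x * ·) ⁻¹' A ∈ p := by
  by_contra! h
  -- The sets `B t` then have the finite intersection property, and an ultrafilter `r`
  -- containing all of them is incompatible with `p = w * (r * p)`.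
  let B : M → Set M := fun t => {x | (t * x * ·) ⁻¹' A ∉ p}
  obtain ⟨r, hr⟩ := Ultrafilter.exists_ultrafilter_of_finite_inter_nonempty (range B) <| by
    intro T hT
    rw [← image_univ, Finset.subset_set_image_iff] at hT
    obtain ⟨T', -, rfl⟩ := hT
    obtain ⟨x, hx⟩ := h T' T'.finite_toSet
    exact ⟨x, by simpa [B] using hx⟩
  obtain ⟨w, hw⟩ := hp r
  have hA' : ∀ᶠ x in w, ∀ᶠ y in r, ∀ᶠ z in p, x * (y * z) ∈ A := by
    rw [← hw] at hA
    exact hA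
  obtain ⟨x, hx⟩ := hA'.exists
  obtain ⟨y, hy, hyB⟩ := (hx.and (hr ⟨x, rfl⟩)).exists
  exact hyB (by simp only [mul_assoc]; exact hy)

theorem Ultrafilter.exists_finite_mul_mul_inv_eq_univ {G : Type*} [Group G]
    {p : Ultrafilter G} (hp : ∀ r : Ultrafilter G, ∃ w, w * (r * p) = p) {A : Set G}
    (hA : A ∈ p) : ∃ T : Set G, T.Finite ∧ T * (A * A⁻¹) = univ := by
  obtain ⟨T, hT, hTA⟩ := Ultrafilter.exists_finite_forall_preimage_mul_mem hp hA
  refine ⟨T⁻¹, hT.inv, eq_univ_of_forall fun x => ?_⟩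
  obtain ⟨t, ht, htx⟩ := hTA x
  obtain ⟨z, hzA, htxz⟩ := Ultrafilter.nonempty_of_mem (inter_mem hA htx)
  have hx : x = t⁻¹ * ((t * x * z) * z⁻¹) := by group
  rw [hx]
  exact mul_mem_mul (inv_mem_inv.2 ht) (mul_mem_mul htxz (inv_mem_inv.2 hzA))

theorem exists_finite_mul_mul_inv_eq_univ_of_finite_mul_mul_eq_univ {G : Type*} [Group G]
    {F U : Set G} (hF : F.Finite) (hFUF : F * U * F = univ) :
    ∃ T : Set G, T.Finite ∧ T * (U * U⁻¹) = univ := by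
  obtain ⟨p, hp⟩ := exists_forall_exists_mul_mul_eq_of_compact_t2_of_continuous_mul_left
    (M := Ultrafilter G) Ultrafilter.continuous_mul_left
  have hcover : ⋃ a ∈ F, ⋃ b ∈ F, (fun u => a * u * b) '' U ∈ p := by
    have hunion : ⋃ a ∈ F, ⋃ b ∈ F, (fun u => a * u * b) '' U = F * U * F := by
      ext
      simp only [mem_iUnion, mem_image, Set.mem_mul]
      aesop
    rw [hunion, hFUF]
    exact univ_mem
  simp only [Ultrafilter.finite_biUnion_mem_iff hF] at hcover
  obtain ⟨a, -, b, -, hab⟩ := hcover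
  obtain ⟨T, hT, hTA⟩ := Ultrafilter.exists_finite_mul_mul_inv_eq_univ hp hab
  refine ⟨T * {a}, hT.mul (finite_singleton a), eq_univ_of_forall fun x => ?_⟩
  obtain ⟨t, ht, _, ⟨_, ⟨u, hu, rfl⟩, v, ⟨v', hv', hvv'⟩, rfl⟩, hx⟩ :=
    hTA.symm ▸ mem_univ (x * a⁻¹)
  simp only at hx hvv'
  have hv : v = (a * v' * b)⁻¹ := by rw [hvv', inv_inv]
  have hxeq : x = t * a * (u * v'⁻¹) :=
    calc x = x * a⁻¹ * a := by group
      _ = t * (a * u * b * v) * a := by rw [hx]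
      _ = t * a * (u * v'⁻¹) := by rw [hv]; group
  rw [hxeq]
  exact mul_mem_mul (mul_mem_mul ht rfl) (mul_mem_mul hu (inv_mem_inv.2 hv'))

theorem totallyBounded_univ_iff_exists_finite_mul_eq_univ {G : Type*} [Group G]
    [TopologicalSpace G] [IsTopologicalGroup G] (L : UniformSpace G)
    (hL : (@uniformity G L) = comap (fun p : G × G => p.1⁻¹ * p.2) (𝓝 1)) :
    @TotallyBounded G L univ ↔ ∀ U ∈ 𝓝 (1 : G), ∃ F : Set G, F.Finite ∧ F * U = univ := by
  have hbasis : (@uniformity G L).HasBasis (· ∈ 𝓝 (1 : G))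
      fun U => (fun p : G × G => p.2⁻¹ * p.1) ⁻¹' U := by
    have hswap : comap (fun p : G × G => p.1⁻¹ * p.2) (𝓝 1) =
        comap (fun p : G × G => p.2⁻¹ * p.1) (𝓝 1) := by
      conv_lhs => rw [← nhds_one_symm, comap_comap]
      congr 1; funext p; simp
    rw [hL, hswap]
    exact (𝓝 1).basis_sets.comap _
  rw [@Filter.HasBasis.totallyBounded_iff _ L _ _ _ hbasis]
  refine forall₂_congr fun U _ => exists_congr fun F => and_congr_right fun _ => ?_
  rw [univ_subset_iff, ← iUnion_mul_left_image]
  congr!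
  ext x
  simp

/-- A topological group is precompact (totally bounded for its left uniformity)
iff for every neighbourhood `U` of the identity there is a finite set `F` with `FUF = G`. -/
theorem stmt_1 {G : Type*} [Group G] [TopologicalSpace G] [IsTopologicalGroup G]
    (L : UniformSpace G)
    (hL : (@uniformity G L) = comap (fun p : G × G => p.1⁻¹ * p.2) (nhds 1)) :
    @TotallyBounded G L univ ↔
      ∀ U ∈ nhds (1 : G), ∃ F : Set G, F.Finite ∧ F * U * F = univ := by
  rw [totallyBounded_univ_iff_exists_finite_mul_eq_univ L hL]
  constructor
  · intro h U hU
    obtain ⟨F, hF, hFU⟩ := h U hU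
    refine ⟨insert 1 F, hF.insert 1, eq_univ_of_univ_subset ?_⟩
    calc univ = F * U * 1 := by rw [mul_one, hFU]
      _ ⊆ insert 1 F * U * insert 1 F := by
        gcongr
        · exact subset_insert 1 F
        · exact singleton_subset_iff.2 (mem_insert 1 F)
  · intro h U hU
    obtain ⟨V, hV, hVU⟩ := exists_nhds_split_inv hU
    obtain ⟨F, hF, hFVF⟩ := h V hV
    obtain ⟨T, hT, hTV⟩ := exists_finite_mul_mul_inv_eq_univ_of_finite_mul_mul_eq_univ hF hFVF
    refine ⟨T, hT, eq_univ_of_univ_subset (hTV ▸ mul_subset_mul_left ?_)⟩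
    rw [← div_eq_mul_inv, div_subset_iff]
    exact hVU
end

section
/- Let (X,d) be a metric space of diameter ≤ 1, Y a non-empty subset of X, and f a Katětov function on Y. Define g = κ_Y(f) on X by g(x) = inf_{y∈Y} min(d(x,y) + f(y), 1). Then g is a Katětov function on X extending f, and the map κ_Y : E(Y) → E(X) is an isometric embedding with respect to the sup-metrics. -/
/-- A Katětov function on a metric space of diameter ≤ 1. -/
def IsKatetov {X : Type*} [MetricSpace X] (f : X → ℝ) : Prop :=
  (∀ x, f x ∈ Set.Icc (0 : ℝ) 1) ∧
  ∀ x y : X, |f x - f y| ≤ dist x y ∧ dist x y ≤ f x + f y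

section Aux

variable {X : Type*} [MetricSpace X] {Y : Set X}

private lemma term_nonneg {f : Y → ℝ} (hf : IsKatetov f) (x : X) (y : Y) :
    0 ≤ min (dist x (y : X) + f y) 1 :=
  le_min (add_nonneg dist_nonneg (hf.1 y).1) zero_le_one

private lemma term_bdd {f : Y → ℝ} (hf : IsKatetov f) (x : X) :
    BddBelow (Set.range fun y : Y => min (dist x (y : X) + f y) 1) :=
  ⟨0, Set.forall_mem_range.mpr fun y => term_nonneg hf x y⟩

private lemma ext_eq [Nonempty Y] {f : Y → ℝ} (hf : IsKatetov f) (y : Y) :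
    (⨅ z : Y, min (dist (y : X) (z : X) + f z) 1) = f y := by
  apply le_antisymm
  · have h := ciInf_le (term_bdd hf (y : X)) y
    simpa [min_eq_left (hf.1 y).2] using h
  · refine le_ciInf fun z => le_min ?_ (hf.1 y).2
    have h := (abs_le.mp (hf.2 y z).1).2
    rw [Subtype.dist_eq] at h
    linarith

private lemma kat_ext [Nonempty Y] (hdiam : ∀ x y : X, dist x y ≤ 1)
    {f : Y → ℝ} (hf : IsKatetov f) :
    IsKatetov (fun x : X => ⨅ y : Y, min (dist x (y : X) + f y) 1) := by
  set F : X → ℝ := fun x : X => ⨅ y : Y, min (dist x (y : X) + f y) 1 with hF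
  have hF0 : ∀ x, 0 ≤ F x := fun x => le_ciInf fun y => term_nonneg hf x y
  have hF1 : ∀ x, F x ≤ 1 := fun x => by
    have y := Classical.arbitrary Y
    exact le_trans (ciInf_le (term_bdd hf x) y) (min_le_right _ _)
  have hFlip : ∀ x x' : X, F x ≤ F x' + dist x x' := by
    intro x x'
    have key : ∀ z : Y, min (dist x (z : X) + f z) 1
        ≤ min (dist x' (z : X) + f z) 1 + dist x x' := by
      intro z
      have h1 : dist x (z : X) + f z ≤ (dist x' (z : X) + f z) + dist x x' := by
        have := dist_triangle x x' (z : X); linarith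
      calc min (dist x (z : X) + f z) 1
          ≤ min ((dist x' (z : X) + f z) + dist x x') (1 + dist x x') :=
            min_le_min h1 (by linarith [dist_nonneg (x := x) (y := x')])
        _ = min (dist x' (z : X) + f z) 1 + dist x x' := min_add_add_right _ _ _
    have : F x - dist x x' ≤ F x' := le_ciInf fun z => by
      have := ciInf_le (term_bdd hf x) z
      have := key z
      simp only [hF]
      linarith
    linarith
  refine ⟨fun x => ⟨hF0 x, hF1 x⟩, fun x x' => ⟨?_, ?_⟩⟩
  · rw [abs_sub_le_iff]
    constructor
    · have := hFlip x x'; linarith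
    · have := hFlip x' x; rw [dist_comm] at this; linarith
  · have key : ∀ z w : Y, dist x x' ≤
        min (dist x (z : X) + f z) 1 + min (dist x' (w : X) + f w) 1 := by
      intro z w
      have ha0 := term_nonneg hf x z
      have hb0 := term_nonneg hf x' w
      have hd1 := hdiam x x'
      rcases le_total (dist x (z : X) + f z) 1 with h1 | h1
      · rcases le_total (dist x' (w : X) + f w) 1 with h2 | h2
        · rw [min_eq_left h1, min_eq_left h2]
          have hzw := (hf.2 z w).2
          rw [Subtype.dist_eq] at hzw
          have tri := dist_triangle4 x (z : X) (w : X) x'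
          have := dist_comm x' (w : X)
          linarith
        · rw [min_eq_right h2]; linarith
      · rw [min_eq_right h1]; linarith
    have h1 : dist x x' - F x' ≤ F x := le_ciInf fun z => by
      have h2 : dist x x' - min (dist x (z : X) + f z) 1 ≤ F x' :=
        le_ciInf fun w => by have := key z w; linarith
      linarith
    linarith

end Aux

/-- For a nonempty `Y ⊆ X` and a Katětov function `f` on `Y`, the function
`κ_Y(f)(x) = inf_{y ∈ Y} min(d(x,y) + f(y), 1)` is a Katětov function on `X` extending `f`,
and `κ_Y : E(Y) → E(X)` is an isometric embedding for the sup-metrics. -/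
theorem stmt_6 {X : Type*} [MetricSpace X] (hdiam : ∀ x y : X, dist x y ≤ 1)
    (Y : Set X) (hY : Y.Nonempty) :
    (∀ f : Y → ℝ, IsKatetov f →
      IsKatetov (fun x : X => ⨅ y : Y, min (dist x (y : X) + f y) 1) ∧
      ∀ y : Y, (⨅ z : Y, min (dist (y : X) (z : X) + f z) 1) = f y) ∧
    ∀ f g : Y → ℝ, IsKatetov f → IsKatetov g →
      (⨆ x : X, |(⨅ y : Y, min (dist x (y : X) + f y) 1) -
          ⨅ y : Y, min (dist x (y : X) + g y) 1|) = ⨆ y : Y, |f y - g y| := by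
  haveI : Nonempty Y := hY.to_subtype
  haveI : Nonempty X := ⟨hY.choose⟩
  refine ⟨fun f hf => ⟨kat_ext hdiam hf, fun y => ext_eq hf y⟩, fun f g hf hg => ?_⟩
  set F : X → ℝ := fun x : X => ⨅ y : Y, min (dist x (y : X) + f y) 1 with hFdef
  set G : X → ℝ := fun x : X => ⨅ y : Y, min (dist x (y : X) + g y) 1 with hGdef
  have hFk := kat_ext hdiam hf
  have hGk := kat_ext hdiam hg
  have hSbdd : BddAbove (Set.range fun y : Y => |f y - g y|) := by
    refine ⟨1, Set.forall_mem_range.mpr fun y => ?_⟩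
    rw [abs_sub_le_iff]
    constructor <;> [linarith [(hf.1 y).2, (hg.1 y).1]; linarith [(hg.1 y).2, (hf.1 y).1]]
  have hXbdd : BddAbove (Set.range fun x : X => |F x - G x|) := by
    refine ⟨1, Set.forall_mem_range.mpr fun x => ?_⟩
    rw [abs_sub_le_iff]
    constructor <;> [linarith [(hFk.1 x).2, (hGk.1 x).1]; linarith [(hGk.1 x).2, (hFk.1 x).1]]
  apply le_antisymm
  · refine ciSup_le fun x => ?_
    set S : ℝ := ⨆ y : Y, |f y - g y| with hSdef
    have hterm : ∀ y : Y, |min (dist x (y : X) + f y) 1 - min (dist x (y : X) + g y) 1|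
        ≤ S := by
      intro y
      have h := abs_min_sub_min_le_max (dist x (y : X) + f y) 1 (dist x (y : X) + g y) 1
      have h2 : max |dist x (y : X) + f y - (dist x (y : X) + g y)| |(1 : ℝ) - 1|
          = |f y - g y| := by
        simp only [add_sub_add_left_eq_sub, sub_self, abs_zero]
        exact max_eq_left (abs_nonneg _)
      rw [h2] at h
      exact h.trans (le_ciSup hSbdd y)
    rw [abs_sub_le_iff]
    constructor
    · have : F x - S ≤ G x := le_ciInf fun y => by
        have h1 := ciInf_le (term_bdd hf x) y
        have h2 := hterm y
        rw [abs_sub_le_iff] at h2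
        simp only [hFdef]
        linarith [h2.1]
      linarith
    · have : G x - S ≤ F x := le_ciInf fun y => by
        have h1 := ciInf_le (term_bdd hg x) y
        have h2 := hterm y
        rw [abs_sub_le_iff] at h2
        simp only [hGdef]
        linarith [h2.2]
      linarith
  · refine ciSup_le fun y => ?_
    have hF : F (y : X) = f y := ext_eq hf y
    have hG : G (y : X) = g y := ext_eq hg y
    have := le_ciSup hXbdd (y : X)
    rwa [hF, hG] at this
end

section
/- The completion of any Urysohn metric space is Urysohn. That is, if (M,d) is a complete metric space of diameter 1 containing a dense subspace A that is Urysohn, then for every finite subset Y ⊆ M and every Katětov function f : Y → [0,1] there exists z ∈ M with d(z,y) = f(y) for all y ∈ Y. -/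
/-!
Extend the Katětov function `f` on `Y` to a Katětov function `G` on all of `M`
(`G x = min 1 (min_{y ∈ Y} (f y + d(x, y)))`). If `p ∈ A` realizes `G` on `Y` up to `ε`, move `Y`
into `A` by choosing points `a y ∈ A` within `δ` of each `y`, and realize in `A` the Katětov
function `min G (ε + 2δ + d(·, p))` on `{p} ∪ a(Y)`: the new point `q` realizes `G` on `Y` up to
`2δ` and lies within `ε + 2δ` of `p`. With `δ` a quarter of `ε`, iterating produces a Cauchy
sequence in `A`, whose limit in the complete space `M` realizes `f` exactly.
-/

open Filter Topology Set

section

variable {M : Type*} [MetricSpace M]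

def IsKatetovOn (f : M → ℝ) (s : Set M) : Prop :=
  ∀ x ∈ s, ∀ y ∈ s, |f x - f y| ≤ dist x y ∧ dist x y ≤ f x + f y

theorem IsKatetovOn.mono {f : M → ℝ} {s t : Set M} (hf : IsKatetovOn f t) (hst : s ⊆ t) :
    IsKatetovOn f s :=
  fun x hx y hy => hf x (hst hx) y (hst hy)

def IsUrysohnSubset (A : Set M) : Prop :=
  ∀ Y : Finset M, ↑Y ⊆ A → ∀ f : M → ℝ, (∀ y ∈ Y, f y ∈ Icc (0 : ℝ) 1) →
    IsKatetovOn f Y → ∃ p ∈ A, ∀ y ∈ Y, dist p y = f y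

theorem exists_katetov_extension (hdiam : ∀ x y : M, dist x y ≤ 1) {Y : Finset M} {f : M → ℝ}
    (hf01 : ∀ y ∈ Y, f y ∈ Icc (0 : ℝ) 1) (hf : IsKatetovOn f Y) :
    ∃ G : M → ℝ, (∀ y ∈ Y, G y = f y) ∧ (∀ x, G x ∈ Icc (0 : ℝ) 1) ∧ IsKatetovOn G univ := by
  rcases Y.eq_empty_or_nonempty with rfl | hne
  · refine ⟨fun _ => 1, by simp, by simp, fun x _ y _ => ?_⟩
    simp only [sub_self, abs_zero, dist_nonneg, true_and]
    linarith [hdiam x y]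
  set g : M → ℝ := fun x => Y.inf' hne fun y => f y + dist x y
  have hg_le (x : M) {y : M} (hy : y ∈ Y) : g x ≤ f y + dist x y := Finset.inf'_le _ hy
  have hg_eq (x : M) : ∃ y ∈ Y, g x = f y + dist x y := Finset.exists_mem_eq_inf' hne _
  have hg_nonneg (x : M) : 0 ≤ g x :=
    Finset.le_inf' _ _ fun y hy => add_nonneg (hf01 y hy).1 dist_nonneg
  have hg_le_add (x x' : M) : g x ≤ g x' + dist x x' := by
    obtain ⟨y, hy, hx'⟩ := hg_eq x'
    linarith [hg_le x hy, dist_triangle x x' y]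
  have hg_sum (x x' : M) : dist x x' ≤ g x + g x' := by
    obtain ⟨y, hy, hx⟩ := hg_eq x
    obtain ⟨y', hy', hx'⟩ := hg_eq x'
    linarith [(hf y hy y' hy').2, dist_triangle4 x y y' x', dist_comm y' x']
  have hg_Y : ∀ y ∈ Y, g y = f y := fun y hy =>
    le_antisymm (by simpa using hg_le y hy) <| Finset.le_inf' _ _ fun z hz => by
      linarith [(abs_le.1 (hf y hy z hz).1).2]
  refine ⟨fun x => min 1 (g x), fun y hy => by simp [hg_Y y hy, (hf01 y hy).2],
    fun x => ⟨le_min zero_le_one (hg_nonneg x), min_le_left _ _⟩, fun x _ x' _ => ⟨?_, ?_⟩⟩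
  · refine (abs_min_sub_min_le_max _ _ _ _).trans (max_le (by simp) (abs_sub_le_iff.2 ⟨?_, ?_⟩))
    · linarith [hg_le_add x x']
    · linarith [hg_le_add x' x, dist_comm x x']
  · have := hg_sum x x'
    have := hdiam x x'
    have := hg_nonneg x
    have := hg_nonneg x'
    simp only [min_def]
    split_ifs <;> linarith

theorem IsKatetovOn.min_const_add_dist {G : M → ℝ} (hG : IsKatetovOn G univ) (p : M) {c : ℝ}
    (hc : 0 ≤ c) :
    IsKatetovOn (fun x => min (G x) (c + dist x p)) {u | dist u p ≤ G u + c} := by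
  intro u hu v hv
  obtain ⟨hG_lip, hG_sum⟩ := hG u trivial v trivial
  refine ⟨(abs_min_sub_min_le_max _ _ _ _).trans (max_le hG_lip ?_), ?_⟩
  · rw [add_sub_add_left_eq_sub]
    exact abs_dist_sub_le u v p
  · have := dist_triangle u p v
    have := dist_comm p v
    simp only [mem_ofPred_eq] at hu hv
    simp only [min_def]
    split_ifs <;> linarith

theorem IsUrysohnSubset.exists_finer_approximation {A : Set M} (hU : IsUrysohnSubset A) (hA : Dense A)
    {G : M → ℝ} (hG01 : ∀ x, G x ∈ Icc (0 : ℝ) 1) (hG : IsKatetovOn G univ) (Y : Finset M)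
    {p : M} (hp : p ∈ A) {ε δ : ℝ} (hε : 0 ≤ ε) (hδ : 0 < δ)
    (hpY : ∀ y ∈ Y, |dist p y - G y| ≤ ε) :
    ∃ q ∈ A, (∀ y ∈ Y, |dist q y - G y| ≤ 2 * δ) ∧ dist p q ≤ ε + 2 * δ := by
  classical
  have hG_lip (x y : M) : |G x - G y| ≤ dist x y := (hG x trivial y trivial).1
  choose a haA hay using fun y => hA.exists_dist_lt y hδ
  set c := ε + 2 * δ
  have hc : 0 ≤ c := by positivity
  have hclose : ∀ y ∈ Y, |dist (a y) p - G (a y)| ≤ c := fun y hy => by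
    have h₁ := abs_le.1 (hpY y hy)
    have h₂ := abs_le.1 (hG_lip y (a y))
    have h₃ := abs_le.1 (abs_dist_sub_le y (a y) p)
    rw [abs_le]
    constructor <;> linarith [hay y, dist_comm p y]
  set X := insert p (Y.image a)
  have hX_subset {T : Set M} (hpT : p ∈ T) (haT : ∀ y ∈ Y, a y ∈ T) : ↑X ⊆ T := by
    simp only [X, Finset.coe_insert, Finset.coe_image, insert_subset_iff, image_subset_iff]
    exact ⟨hpT, haT⟩
  have hXA : ↑X ⊆ A := hX_subset hp fun y _ => haA y
  have hXS : ↑X ⊆ {u | dist u p ≤ G u + c} :=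
    hX_subset (show dist p p ≤ G p + c by linarith [dist_self p, (hG01 p).1]) fun y hy =>
      show dist (a y) p ≤ G (a y) + c by linarith [(abs_le.1 (hclose y hy)).2]
  obtain ⟨q, hqA, hq⟩ := hU X hXA (fun x => min (G x) (c + dist x p))
    (fun x _ => ⟨le_min (hG01 x).1 (by positivity), (min_le_left _ _).trans (hG01 x).2⟩)
    ((hG.min_const_add_dist p hc).mono hXS)
  have hqa : ∀ y ∈ Y, dist q (a y) = G (a y) := fun y hy => by
    rw [hq (a y) (Finset.mem_insert_of_mem (Finset.mem_image_of_mem a hy))]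
    exact min_eq_left (by linarith [(abs_le.1 (hclose y hy)).1])
  refine ⟨q, hqA, fun y hy => ?_, ?_⟩
  · have h₁ := abs_le.1 (hG_lip (a y) y)
    have h₂ := abs_le.1 (abs_dist_sub_le y (a y) q)
    rw [abs_le]
    constructor <;> linarith [hay y, hqa y hy, dist_comm q y, dist_comm q (a y), dist_comm y (a y)]
  · rw [dist_comm, hq p (Finset.mem_insert_self _ _), dist_self, add_zero]
    exact min_le_right _ _

theorem exists_seq_tendsto_of_exists_dist_le [CompleteSpace M] {S : ℕ → Set M} {C r : ℝ}
    (hr : r < 1) (h0 : (S 0).Nonempty)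
    (hstep : ∀ n, ∀ x ∈ S n, ∃ x' ∈ S (n + 1), dist x x' ≤ C * r ^ n) :
    ∃ u : ℕ → M, (∀ n, u n ∈ S n) ∧ ∃ z, Tendsto u atTop (𝓝 z) := by
  choose! g hgS hgd using hstep
  obtain ⟨x₀, hx₀⟩ := h0
  let u : ℕ → M := fun n => Nat.rec (motive := fun _ => M) x₀ g n
  have hu (n : ℕ) : u n ∈ S n := by
    induction n with
    | zero => exact hx₀
    | succ n ih => exact hgS n _ ih
  exact ⟨u, hu, cauchySeq_tendsto_of_complete
    (cauchySeq_of_le_geometric r C hr fun n => hgd n _ (hu n))⟩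

end

/-- If a complete metric space `M` of diameter ≤ 1 has a dense subset `A` with
the Urysohn property (every Katětov function on a finite subset of `A` is realized by a point
of `A`), then `M` itself realizes every Katětov function on a finite subset of `M`. -/
theorem stmt_7 {M : Type*} [MetricSpace M] [CompleteSpace M]
    (hdiam : ∀ x y : M, dist x y ≤ 1) (A : Set M) (hA : Dense A)
    (hU : ∀ Y : Finset M, ↑Y ⊆ A → ∀ f : M → ℝ,
      (∀ y ∈ Y, f y ∈ Set.Icc (0 : ℝ) 1) →
      (∀ y ∈ Y, ∀ z ∈ Y, |f y - f z| ≤ dist y z ∧ dist y z ≤ f y + f z) →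
      ∃ p ∈ A, ∀ y ∈ Y, dist p y = f y)
    (Y : Finset M) (f : M → ℝ)
    (hf01 : ∀ y ∈ Y, f y ∈ Set.Icc (0 : ℝ) 1)
    (hfk : ∀ y ∈ Y, ∀ z ∈ Y, |f y - f z| ≤ dist y z ∧ dist y z ≤ f y + f z) :
    ∃ z : M, ∀ y ∈ Y, dist z y = f y := by
  have hUA : IsUrysohnSubset A := hU
  obtain ⟨p₀, hp₀, -⟩ := hU ∅ (by simp) (fun _ => 0) (by simp) (by simp)
  obtain ⟨G, hGY, hG01, hG⟩ := exists_katetov_extension hdiam hf01 hfk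
  set S : ℕ → Set M := fun n => {x ∈ A | ∀ y ∈ Y, |dist x y - G y| ≤ (1 / 2) ^ n}
  have hS₀ : p₀ ∈ S 0 := ⟨hp₀, fun y _ => by
    rw [pow_zero, abs_le]
    constructor <;> linarith [(hG01 y).1, (hG01 y).2, hdiam p₀ y, dist_nonneg (x := p₀) (y := y)]⟩
  have hstep : ∀ n, ∀ x ∈ S n, ∃ x' ∈ S (n + 1), dist x x' ≤ 3 / 2 * (1 / 2) ^ n := by
    rintro n x ⟨hxA, hxY⟩
    obtain ⟨q, hqA, hqY, hxq⟩ := hUA.exists_finer_approximation hA hG01 hG Y hxA (by positivity)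
      (by positivity : (0 : ℝ) < (1 / 2) ^ (n + 2)) hxY
    exact ⟨q, ⟨hqA, fun y hy => (hqY y hy).trans_eq (by ring)⟩, hxq.trans_eq (by ring)⟩
  obtain ⟨u, hu, z, hz⟩ := exists_seq_tendsto_of_exists_dist_le (by norm_num) ⟨p₀, hS₀⟩ hstep
  refine ⟨z, fun y hy => tendsto_nhds_unique (hz.dist tendsto_const_nhds) ?_⟩
  rw [← hGY y hy]
  exact tendsto_iff_dist_tendsto_zero.2 <| squeeze_zero (fun _ => dist_nonneg)
    (fun n => (Real.dist_eq _ _).trans_le ((hu n).2 y hy))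
    (tendsto_pow_atTop_nhds_zero_of_lt_one (by norm_num) (by norm_num))
end

section
/- If a metric space M of diameter 1 is ω-homogeneous and contains an isometric copy of every finite metric space of diameter ≤ 1, then M is Urysohn. -/
/-- A metric space of diameter ≤ 1 which realizes every Katětov function on every finite
subset. -/
def IsUrysohnSpace (M : Type*) [MetricSpace M] : Prop :=
  (∀ x y : M, dist x y ≤ 1) ∧
  ∀ (Y : Finset M) (f : M → ℝ),
    (∀ y ∈ Y, f y ∈ Set.Icc (0 : ℝ) 1) →
    (∀ y ∈ Y, ∀ z ∈ Y, |f y - f z| ≤ dist y z ∧ dist y z ≤ f y + f z) →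
    ∃ p : M, ∀ y ∈ Y, dist p y = f y

/-- A metric space of diameter ≤ 1 which is ω-homogeneous and contains an
isometric copy of every finite metric space of diameter ≤ 1 is Urysohn. -/
theorem stmt_9 {M : Type*} [MetricSpace M]
    (hdiam : ∀ x y : M, dist x y ≤ 1)
    (hhom : ∀ (A : Finset M) (φ : M → M),
      (∀ x ∈ A, ∀ y ∈ A, dist (φ x) (φ y) = dist x y) →
      ∃ g : M ≃ᵢ M, ∀ x ∈ A, g x = φ x)
    (huniv : ∀ (n : ℕ) (D : Fin n → Fin n → ℝ),
      (∀ i, D i i = 0) → (∀ i j, D i j = D j i) →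
      (∀ i j k, D i k ≤ D i j + D j k) → (∀ i j, i ≠ j → 0 < D i j) →
      (∀ i j, D i j ≤ 1) →
      ∃ e : Fin n → M, ∀ i j, dist (e i) (e j) = D i j) :
    IsUrysohnSpace M := by
  classical
  refine ⟨hdiam, fun Y f hIcc hKat => ?_⟩
  by_cases h0 : ∃ y ∈ Y, f y = 0
  · obtain ⟨y, hy, hfy⟩ := h0
    refine ⟨y, fun z hz => ?_⟩
    obtain ⟨h1, h2⟩ := hKat y hy z hz
    rw [hfy] at h1 h2
    rw [zero_sub, abs_neg, abs_of_nonneg (hIcc z hz).1] at h1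
    rw [zero_add] at h2
    linarith
  · push_neg at h0
    have hfpos : ∀ y ∈ Y, 0 < f y := fun y hy =>
      lt_of_le_of_ne (hIcc y hy).1 (fun h => h0 y hy h.symm)
    set n := Y.card with hn
    set ys : Fin n → M := fun i => (Y.equivFin.symm i : M) with hys
    have hysY : ∀ i, ys i ∈ Y := fun i => (Y.equivFin.symm i).2
    have hysinj : Function.Injective ys := fun i j h => by
      have := Subtype.ext h
      exact Y.equivFin.symm.injective this
    -- define the extended distance matrix
    set D : Fin (n + 1) → Fin (n + 1) → ℝ := fun i j =>
      if hi : (i : ℕ) < n then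
        if hj : (j : ℕ) < n then dist (ys ⟨i, hi⟩) (ys ⟨j, hj⟩)
        else f (ys ⟨i, hi⟩)
      else
        if hj : (j : ℕ) < n then f (ys ⟨j, hj⟩) else 0
      with hD
    -- value lemmas
    have hD11 : ∀ (i j : Fin (n + 1)) (hi : (i : ℕ) < n) (hj : (j : ℕ) < n),
        D i j = dist (ys ⟨i, hi⟩) (ys ⟨j, hj⟩) := by
      intro i j hi hj; simp only [hD, dif_pos hi, dif_pos hj]
    have hD10 : ∀ (i j : Fin (n + 1)) (hi : (i : ℕ) < n) (hj : ¬ (j : ℕ) < n),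
        D i j = f (ys ⟨i, hi⟩) := by
      intro i j hi hj; simp only [hD, dif_pos hi, dif_neg hj]
    have hD01 : ∀ (i j : Fin (n + 1)) (hi : ¬ (i : ℕ) < n) (hj : (j : ℕ) < n),
        D i j = f (ys ⟨j, hj⟩) := by
      intro i j hi hj; simp only [hD, dif_neg hi, dif_pos hj]
    have hD00 : ∀ (i j : Fin (n + 1)) (hi : ¬ (i : ℕ) < n) (hj : ¬ (j : ℕ) < n),
        D i j = 0 := by
      intro i j hi hj; simp only [hD, dif_neg hi, dif_neg hj]
    have hKat' : ∀ i j : Fin n, |f (ys i) - f (ys j)| ≤ dist (ys i) (ys j) ∧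
        dist (ys i) (ys j) ≤ f (ys i) + f (ys j) := fun i j =>
      hKat _ (hysY i) _ (hysY j)
    have habs : ∀ i j : Fin n,
        f (ys i) - f (ys j) ≤ dist (ys i) (ys j) ∧
        f (ys j) - f (ys i) ≤ dist (ys i) (ys j) := fun i j =>
      abs_sub_le_iff.mp (hKat' i j).1
    have hDrefl : ∀ i, D i i = 0 := by
      intro i
      by_cases hi : (i : ℕ) < n
      · rw [hD11 i i hi hi, dist_self]
      · exact hD00 i i hi hi
    have hDsymm : ∀ i j, D i j = D j i := by
      intro i j
      by_cases hi : (i : ℕ) < n <;> by_cases hj : (j : ℕ) < n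
      · rw [hD11 i j hi hj, hD11 j i hj hi, dist_comm]
      · rw [hD10 i j hi hj, hD01 j i hj hi]
      · rw [hD01 i j hi hj, hD10 j i hj hi]
      · rw [hD00 i j hi hj, hD00 j i hj hi]
    have hDtri : ∀ i j k, D i k ≤ D i j + D j k := by
      intro i j k
      by_cases hi : (i : ℕ) < n <;> by_cases hj : (j : ℕ) < n <;>
        by_cases hk : (k : ℕ) < n
      · rw [hD11 i k hi hk, hD11 i j hi hj, hD11 j k hj hk]
        exact dist_triangle _ _ _
      · rw [hD10 i k hi hk, hD11 i j hi hj, hD10 j k hj hk]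
        linarith [(habs ⟨i, hi⟩ ⟨j, hj⟩).1]
      · rw [hD11 i k hi hk, hD10 i j hi hj, hD01 j k hj hk]
        exact (hKat' ⟨i, hi⟩ ⟨k, hk⟩).2
      · rw [hD10 i k hi hk, hD10 i j hi hj, hD00 j k hj hk]
        linarith
      · rw [hD01 i k hi hk, hD01 i j hi hj, hD11 j k hj hk]
        linarith [(habs ⟨j, hj⟩ ⟨k, hk⟩).2]
      · rw [hD00 i k hi hk, hD01 i j hi hj, hD10 j k hj hk]
        linarith [hfpos _ (hysY ⟨j, hj⟩)]
      · rw [hD01 i k hi hk, hD00 i j hi hj, hD01 j k hj hk]; linarith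
      · rw [hD00 i k hi hk, hD00 i j hi hj, hD00 j k hj hk]
        norm_num
    have hDpos : ∀ i j, i ≠ j → 0 < D i j := by
      intro i j hij
      by_cases hi : (i : ℕ) < n <;> by_cases hj : (j : ℕ) < n
      · rw [hD11 i j hi hj]
        refine dist_pos.mpr (fun h => hij ?_)
        exact Fin.ext (show (i : ℕ) = (j : ℕ) by
          simpa using congrArg Fin.val (hysinj h))
      · rw [hD10 i j hi hj]; exact hfpos _ (hysY _)
      · rw [hD01 i j hi hj]; exact hfpos _ (hysY _)
      · exact absurd (Fin.ext (by omega : (i : ℕ) = (j : ℕ))) hij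
    have hDle : ∀ i j, D i j ≤ 1 := by
      intro i j
      by_cases hi : (i : ℕ) < n <;> by_cases hj : (j : ℕ) < n
      · rw [hD11 i j hi hj]; exact hdiam _ _
      · rw [hD10 i j hi hj]; exact (hIcc _ (hysY _)).2
      · rw [hD01 i j hi hj]; exact (hIcc _ (hysY _)).2
      · rw [hD00 i j hi hj]; exact zero_le_one
    obtain ⟨e, he⟩ := huniv (n + 1) D hDrefl hDsymm hDtri hDpos hDle
    have heinj : Function.Injective e := by
      intro i j h
      by_contra hij
      have := he i j
      rw [h, dist_self] at this
      exact absurd this.symm (ne_of_gt (hDpos i j hij))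
    have hcs : ∀ i : Fin n, ((i.castSucc : Fin (n + 1)) : ℕ) < n := fun i => i.isLt
    have heD : ∀ i j : Fin n, dist (e i.castSucc) (e j.castSucc) = dist (ys i) (ys j) := by
      intro i j
      rw [he, hD11 _ _ (hcs i) (hcs j)]; rfl
    have hL : ¬ ((Fin.last n : Fin (n + 1)) : ℕ) < n := by simp
    have heL : ∀ i : Fin n, dist (e (Fin.last n)) (e i.castSucc) = f (ys i) := by
      intro i
      rw [he, hD01 _ _ hL (hcs i)]; rfl
    set A : Finset M := Finset.image (fun i : Fin n => e i.castSucc) Finset.univ with hA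
    set φ : M → M := fun x =>
      if h : ∃ i : Fin n, e i.castSucc = x then ys h.choose else x with hφ
    have hφe : ∀ i : Fin n, φ (e i.castSucc) = ys i := by
      intro i
      have hex : ∃ j : Fin n, e j.castSucc = e i.castSucc := ⟨i, rfl⟩
      have hch : hex.choose = i := by
        have := heinj hex.choose_spec
        exact Fin.castSucc_injective n this
      simp only [hφ, dif_pos hex, hch]
    have hiso : ∀ x ∈ A, ∀ y ∈ A, dist (φ x) (φ y) = dist x y := by
      intro x hx y hy
      simp only [hA, Finset.mem_image, Finset.mem_univ, true_and] at hx hy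
      obtain ⟨i, rfl⟩ := hx
      obtain ⟨j, rfl⟩ := hy
      rw [hφe i, hφe j, heD]
    obtain ⟨g, hg⟩ := hhom A φ hiso
    refine ⟨g (e (Fin.last n)), fun y hy => ?_⟩
    set i : Fin n := Y.equivFin ⟨y, hy⟩ with hi
    have hyi : ys i = y := by
      simp only [hys, hi, Equiv.symm_apply_apply]
    have hmem : e i.castSucc ∈ A := by
      simp [hA]
    have hgy : g (e i.castSucc) = y := by
      rw [hg _ hmem, hφe i, hyi]
    calc dist (g (e (Fin.last n))) y
        = dist (g (e (Fin.last n))) (g (e i.castSucc)) := by rw [hgy]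
      _ = dist (e (Fin.last n)) (e i.castSucc) := g.dist_eq _ _
      _ = f (ys i) := heL i
      _ = f y := by rw [hyi]
end

section
/- Let {M_β : β ≤ α} be an increasing continuous transfinite chain of metric spaces (M_β ⊆ M_γ isometrically for β ≤ γ, with unions at limit stages). If M_β is g-embedded in M_{β+1} for every β < α, then M₀ is g-embedded in M_α. -/
/-- The topology of pointwise convergence on the isometry group of a metric space. -/
instance isoTopology (X : Type*) [MetricSpace X] : TopologicalSpace (X ≃ᵢ X) :=
  TopologicalSpace.induced (fun g (x : X) => g x) Pi.topologicalSpace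

/-- `s` is g-embedded in `t`: `s ⊆ t` and there is a continuous homomorphism
`Iso(s) → Iso(t)` such that the image of each isometry `φ` of `s` extends `φ`. -/
def GEmbedded {L : Type*} [MetricSpace L] (s t : Set L) : Prop :=
  ∃ h : s ⊆ t, ∃ e : (↥s ≃ᵢ ↥s) →* (↥t ≃ᵢ ↥t),
    Continuous e ∧ ∀ (φ : ↥s ≃ᵢ ↥s) (x : ↥s),
      ((e φ) (Set.inclusion h x) : L) = ((φ x : ↥s) : L)


/-!
Fix the homomorphisms `Iso(M_β) →* Iso(M_{β+1})` witnessing the steps. Starting from the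
tautological action of `Iso(M₀)` on `M₀`, define by transfinite recursion an action of
`Iso(M₀)` on every `M_β`: at a successor compose with the step homomorphism, at a limit let
`φ` act on `x` as it does at some earlier stage containing `x`. By induction the actions are
coherent (the action on `M_β` extends the one on `M_γ` for `γ ≤ β`), so the choice at limits
is immaterial; at a limit the actions on the directed family `M_γ`, `γ < β`, glue to
isometries of the union, and continuity survives because the topology is pointwise
convergence and every point already lies in an earlier stage.
-/

open Set

section IsometricAction

variable {L : Type*} [MetricSpace L] (G : Type*) [Group G] [TopologicalSpace G]

/-- Actions are recorded as maps `G → L → L` on the ambient space, so that actions on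
different subsets of `L` can be compared pointwise. -/
def IsometricActionOn (s : Set L) (F : G → L → L) : Prop :=
  ∃ e : G →* (s ≃ᵢ s), Continuous e ∧ ∀ g (x : s), (e g x : L) = F g x

variable {G}

namespace IsometricActionOn

variable {s t : Set L} {F F' : G → L → L}

noncomputable def hom (h : IsometricActionOn G s F) : G →* (s ≃ᵢ s) := h.choose

theorem continuous_hom (h : IsometricActionOn G s F) : Continuous h.hom := h.choose_spec.1

theorem hom_apply (h : IsometricActionOn G s F) (g : G) (x : s) : (h.hom g x : L) = F g x :=
  h.choose_spec.2 g x

theorem mapsTo (h : IsometricActionOn G s F) (g : G) : MapsTo (F g) s s := fun x hx =>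
  h.hom_apply g ⟨x, hx⟩ ▸ (h.hom g ⟨x, hx⟩).2

theorem apply_one (h : IsometricActionOn G s F) {x : L} (hx : x ∈ s) : F 1 x = x := by
  rw [← h.hom_apply 1 ⟨x, hx⟩, map_one]
  rfl

theorem apply_mul (h : IsometricActionOn G s F) (g k : G) {x : L} (hx : x ∈ s) :
    F (g * k) x = F g (F k x) := by
  rw [← h.hom_apply k ⟨x, hx⟩, ← h.hom_apply, ← h.hom_apply (g * k) ⟨x, hx⟩, map_mul]
  rfl

theorem dist_eq (h : IsometricActionOn G s F) (g : G) {x y : L} (hx : x ∈ s) (hy : y ∈ s) :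
    dist (F g x) (F g y) = dist x y := by
  rw [← h.hom_apply g ⟨x, hx⟩, ← h.hom_apply g ⟨y, hy⟩, ← Subtype.dist_eq,
    (h.hom g).dist_eq, Subtype.dist_eq]

theorem continuous_apply (h : IsometricActionOn G s F) {x : L} (hx : x ∈ s) :
    Continuous fun g => F g x := by
  simp only [← h.hom_apply _ ⟨x, hx⟩]
  exact continuous_subtype_val.comp
    (((_root_.continuous_apply _).comp continuous_induced_dom).comp h.continuous_hom)

theorem of_forall (hmaps : ∀ g, MapsTo (F g) s s) (hone : ∀ x ∈ s, F 1 x = x)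
    (hmul : ∀ g k, ∀ x ∈ s, F (g * k) x = F g (F k x))
    (hdist : ∀ g, ∀ x ∈ s, ∀ y ∈ s, dist (F g x) (F g y) = dist x y)
    (hcont : ∀ x ∈ s, Continuous fun g => F g x) : IsometricActionOn G s F := by
  let T : G → s → s := fun g x => ⟨F g x, hmaps g x.2⟩
  have hT : ∀ g k x, T g (T k x) = T (g * k) x := fun g k x =>
    Subtype.ext (hmul g k x x.2).symm
  have hT1 : ∀ x, T 1 x = x := fun x => Subtype.ext (hone x x.2)
  let e : G → (s ≃ᵢ s) := fun g =>
    { toFun := T g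
      invFun := T g⁻¹
      left_inv := fun x => by rw [hT, inv_mul_cancel, hT1]
      right_inv := fun x => by rw [hT, mul_inv_cancel, hT1]
      isometry_toFun := Isometry.of_dist_eq fun x y => hdist g x x.2 y y.2 }
  refine ⟨MonoidHom.mk' e fun g k => IsometryEquiv.ext fun x => (hT g k x).symm, ?_,
    fun _ _ => rfl⟩
  exact continuous_induced_rng.2 (continuous_pi fun x => (hcont x x.2).subtype_mk _)

theorem congr (h : IsometricActionOn G s F) (hFF' : ∀ g, EqOn (F g) (F' g) s) :
    IsometricActionOn G s F' :=
  ⟨h.hom, h.continuous_hom, fun g x => (h.hom_apply g x).trans (hFF' g x.2)⟩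

theorem iUnion {ι : Type*} {s : ι → Set L} (hs : Directed (· ⊆ ·) s)
    (h : ∀ i, IsometricActionOn G (s i) F) : IsometricActionOn G (⋃ i, s i) F := by
  refine of_forall (fun g x hx => ?_) (fun x hx => ?_) (fun g k x hx => ?_)
    (fun g x hx y hy => ?_) (fun x hx => ?_)
  all_goals obtain ⟨i, hxi⟩ := mem_iUnion.1 hx
  · exact mem_iUnion_of_mem i ((h i).mapsTo g hxi)
  · exact (h i).apply_one hxi
  · exact (h i).apply_mul g k hxi
  · obtain ⟨j, hyj⟩ := mem_iUnion.1 hy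
    obtain ⟨k, hik, hjk⟩ := hs i j
    exact (h k).dist_eq g (hik hxi) (hjk hyj)
  · exact (h i).continuous_apply hxi

end IsometricActionOn

end IsometricAction

namespace GEmbedded

variable {L : Type*} [MetricSpace L] {s t : Set L}

theorem subset (h : GEmbedded s t) : s ⊆ t := h.1

noncomputable def hom (h : GEmbedded s t) : (s ≃ᵢ s) →* (t ≃ᵢ t) := h.2.choose

theorem continuous_hom (h : GEmbedded s t) : Continuous h.hom := h.2.choose_spec.1

theorem hom_apply_inclusion (h : GEmbedded s t) (φ : s ≃ᵢ s) (x : s) :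
    (h.hom φ (inclusion h.subset x) : L) = φ x :=
  h.2.choose_spec.2 φ x

end GEmbedded

section Extension

variable {L : Type*} [MetricSpace L] {G : Type*} [Group G] [TopologicalSpace G]
  {s t : Set L} {F : G → L → L}

namespace IsometricActionOn

open Classical in
noncomputable def extend (hF : IsometricActionOn G s F) (hst : GEmbedded s t) : G → L → L :=
  fun g x => if hx : x ∈ t then (hst.hom (hF.hom g) ⟨x, hx⟩ : L) else x

theorem isometricActionOn_extend (hF : IsometricActionOn G s F) (hst : GEmbedded s t) :
    IsometricActionOn G t (hF.extend hst) :=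
  ⟨hst.hom.comp hF.hom, hst.continuous_hom.comp hF.continuous_hom,
    fun _ x => by rw [extend, dif_pos x.2]; rfl⟩

theorem extend_eqOn (hF : IsometricActionOn G s F) (hst : GEmbedded s t) (g : G) :
    EqOn (hF.extend hst g) (F g) s := fun x hx => by
  rw [extend, dif_pos (hst.subset hx), ← hF.hom_apply g ⟨x, hx⟩]
  exact hst.hom_apply_inclusion _ ⟨x, hx⟩

end IsometricActionOn

open Classical in
noncomputable def isoAction (s : Set L) : (s ≃ᵢ s) → L → L :=
  fun φ x => if hx : x ∈ s then φ ⟨x, hx⟩ else x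

theorem isometricActionOn_isoAction (s : Set L) :
    IsometricActionOn (s ≃ᵢ s) s (isoAction s) :=
  ⟨MonoidHom.id _, continuous_id, fun _ x => by rw [isoAction, dif_pos x.2]; rfl⟩

theorem GEmbedded.of_isometricActionOn {F : (s ≃ᵢ s) → L → L} (hst : s ⊆ t)
    (h : IsometricActionOn (s ≃ᵢ s) t F) (hF : ∀ φ, EqOn (F φ) (isoAction s φ) s) :
    GEmbedded s t :=
  ⟨hst, h.hom, h.continuous_hom, fun φ x =>
    (h.hom_apply φ _).trans ((hF φ x.2).trans (dif_pos x.2))⟩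

end Extension

section Chain

variable {L : Type*} [MetricSpace L] (G : Type*) [Group G] [TopologicalSpace G]
  (M : Ordinal → Set L) (F₀ : G → L → L)

open Classical in
noncomputable def chainAction (β : Ordinal) : G → L → L :=
  Ordinal.limitRecOn β F₀
    (fun γ F =>
      if h : IsometricActionOn G (M γ) F ∧ GEmbedded (M γ) (M (γ + 1)) then h.1.extend h.2
      else F)
    (fun β _ F g x => if h : ∃ γ < β, x ∈ M γ then F h.choose h.choose_spec.1 g x else x)

variable {G M F₀}

theorem chainAction_zero : chainAction G M F₀ 0 = F₀ :=
  Ordinal.limitRecOn_zero ..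

theorem chainAction_add_one {γ : Ordinal} (h : IsometricActionOn G (M γ) (chainAction G M F₀ γ))
    (hγ : GEmbedded (M γ) (M (γ + 1))) : chainAction G M F₀ (γ + 1) = h.extend hγ := by
  rw [chainAction, Ordinal.limitRecOn_add_one, dif_pos ⟨h, hγ⟩]
  rfl

theorem chainAction_limit_apply {β : Ordinal} (hβ : Order.IsSuccLimit β) (g : G) {x : L}
    (h : ∃ γ < β, x ∈ M γ) : chainAction G M F₀ β g x = chainAction G M F₀ h.choose g x := by
  rw [chainAction, Ordinal.limitRecOn_limit _ _ _ _ hβ]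
  exact dif_pos h

variable {α : Ordinal}

theorem isometricActionOn_chainAction_of_isSuccLimit
    (hmono : ∀ β γ : Ordinal, β ≤ γ → γ ≤ α → M β ⊆ M γ) {β : Ordinal} (hβα : β ≤ α)
    (hβ : Order.IsSuccLimit β) (hMβ : M β = ⋃ γ ∈ Iio β, M γ)
    (IH : ∀ γ < β, IsometricActionOn G (M γ) (chainAction G M F₀ γ) ∧
      ∀ δ ≤ γ, ∀ g, EqOn (chainAction G M F₀ γ g) (chainAction G M F₀ δ g) (M δ)) :
    IsometricActionOn G (M β) (chainAction G M F₀ β) ∧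
      ∀ γ ≤ β, ∀ g, EqOn (chainAction G M F₀ β g) (chainAction G M F₀ γ g) (M γ) := by
  -- two earlier stages containing `x` agree at `x`, since both agree with their maximum
  have coh : ∀ γ < β, ∀ g, EqOn (chainAction G M F₀ β g) (chainAction G M F₀ γ g) (M γ) := by
    intro γ hγ g x hx
    have hx' : ∃ γ < β, x ∈ M γ := ⟨γ, hγ, hx⟩
    obtain ⟨hγ', hxγ'⟩ := hx'.choose_spec
    have hmax := (IH _ (max_lt hγ hγ')).2
    rw [chainAction_limit_apply hβ g hx', ← hmax _ (le_max_right _ _) g hxγ',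
      hmax _ (le_max_left _ _) g hx]
  refine ⟨?_, fun γ hγ => ?_⟩
  · rw [hMβ, biUnion_eq_iUnion]
    exact .iUnion (Monotone.directed_le fun γ δ h => hmono _ _ h (δ.2.le.trans hβα))
      fun γ => (IH γ γ.2).1.congr fun g => (coh γ γ.2 g).symm
  · rcases hγ.lt_or_eq with hγ | rfl
    exacts [coh γ hγ, fun _ => eqOn_refl _ _]

theorem isometricActionOn_chainAction (hF₀ : IsometricActionOn G (M 0) F₀)
    (hmono : ∀ β γ : Ordinal, β ≤ γ → γ ≤ α → M β ⊆ M γ)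
    (hcont : ∀ β ≤ α, Order.IsSuccLimit β → M β = ⋃ γ ∈ Iio β, M γ)
    (hstep : ∀ β < α, GEmbedded (M β) (M (β + 1))) (β : Ordinal) (hβα : β ≤ α) :
    IsometricActionOn G (M β) (chainAction G M F₀ β) ∧
      ∀ γ ≤ β, ∀ g, EqOn (chainAction G M F₀ β g) (chainAction G M F₀ γ g) (M γ) := by
  induction β using Ordinal.limitRecOn with
  | zero =>
    refine ⟨chainAction_zero (G := G) (M := M) ▸ hF₀, fun γ hγ _ => ?_⟩
    rw [nonpos_iff_eq_zero.1 hγ]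
    exact eqOn_refl _ _
  | add_one γ IH =>
    have hγα : γ < α := (Order.lt_add_one_iff.2 le_rfl).trans_le hβα
    obtain ⟨hA, hcoh⟩ := IH hγα.le
    refine ⟨chainAction_add_one hA (hstep γ hγα) ▸ hA.isometricActionOn_extend _,
      fun δ hδ g => ?_⟩
    rw [chainAction_add_one hA (hstep γ hγα)]
    rcases hδ.lt_or_eq with hδ | rfl
    · have hδγ : δ ≤ γ := Order.lt_add_one_iff.1 hδ
      exact ((hA.extend_eqOn _ g).mono (hmono δ γ hδγ hγα.le)).trans (hcoh δ hδγ g)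
    · rw [chainAction_add_one hA (hstep γ hγα)]
      exact eqOn_refl _ _
  | limit β hβ IH =>
    exact isometricActionOn_chainAction_of_isSuccLimit hmono hβα hβ (hcont β hβα hβ)
      fun γ hγ => IH γ hγ (hγ.le.trans hβα)

end Chain

/-- For an increasing continuous transfinite chain `{M_β : β ≤ α}` of metric
spaces, if each `M_β` is g-embedded in `M_{β+1}` then `M₀` is g-embedded in `M_α`. -/
theorem stmt_10 {L : Type*} [MetricSpace L] (α : Ordinal) (M : Ordinal → Set L)
    (hmono : ∀ β γ : Ordinal, β ≤ γ → γ ≤ α → M β ⊆ M γ)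
    (hcont : ∀ β ≤ α, Order.IsSuccLimit β → M β = ⋃ γ ∈ Set.Iio β, M γ)
    (hstep : ∀ β < α, GEmbedded (M β) (M (β + 1))) :
    GEmbedded (M 0) (M α) := by
  obtain ⟨hA, hcoh⟩ :=
    isometricActionOn_chainAction (isometricActionOn_isoAction (M 0)) hmono hcont hstep α le_rfl
  exact .of_isometricActionOn (hmono 0 α zero_le le_rfl) hA fun φ => by
    simpa only [chainAction_zero] using hcoh 0 zero_le φ
end

section
/- Let (X,d) be an Urysohn metric space, and let a₁,…,a_n, b₁,…,b_n ∈ X satisfy |d(a_i,a_j) − d(b_i,b_j)| ≤ 2ε for all i,j. Then there exist points c₁,…,c_n ∈ X with d(c_i,c_j) = d(b_i,b_j) and d(a_i,c_i) ≤ ε for all i,j. -/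
open Finset

section Truncation

variable {γ : Type*} [PseudoMetricSpace γ]

theorem abs_min_one_dist_sub_le (k k' j : γ) :
    |min 1 (dist k j) - min 1 (dist k' j)| ≤ min 1 (dist k k') := by
  have h := abs_dist_sub_le k k' j
  rw [abs_le] at h ⊢
  have := dist_nonneg (x := k) (y := j)
  have := dist_nonneg (x := k') (y := j)
  constructor <;> simp only [min_def] <;> split_ifs <;> linarith

theorem min_one_dist_le_add (k k' j : γ) :
    min 1 (dist k k') ≤ min 1 (dist k j) + min 1 (dist k' j) := by
  have h := dist_triangle_right k k' j
  have := dist_nonneg (x := k) (y := j)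
  have := dist_nonneg (x := k') (y := j)
  simp only [min_def]
  split_ifs <;> linarith

end Truncation

def IsTruncatedIsometryOn {γ X : Type*} [PseudoMetricSpace γ] [MetricSpace X]
    (z : γ → X) (u : Finset γ) : Prop :=
  ∀ k ∈ u, ∀ k' ∈ u, dist (z k) (z k') = min 1 (dist k k')

namespace IsUrysohnSpace

variable {X : Type*} [MetricSpace X]

theorem exists_dist_eq_of_katetov (hX : IsUrysohnSpace X) {ι : Type*} (u : Finset ι)
    (x : ι → X) (g : ι → ℝ) (hg : ∀ k ∈ u, g k ∈ Set.Icc (0 : ℝ) 1)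
    (hkat : ∀ k ∈ u, ∀ k' ∈ u,
      |g k - g k'| ≤ dist (x k) (x k') ∧ dist (x k) (x k') ≤ g k + g k') :
    ∃ p, ∀ k ∈ u, dist p (x k) = g k := by
  classical
  rcases u.eq_empty_or_nonempty with rfl | ⟨k₀, -⟩
  · obtain ⟨p, -⟩ := hX.2 ∅ 0 (by simp) (by simp)
    exact ⟨p, by simp⟩
  have : Nonempty ι := ⟨k₀⟩
  set f : X → ℝ := fun y => g (Function.invFunOn x u y)
  -- `g` is constant on the fibres of `x` over `u`, so `f` is well defined on `x '' u`.
  have hf : ∀ k ∈ u, f (x k) = g k := by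
    intro k hk
    have hmem : Function.invFunOn x u (x k) ∈ u := Function.invFunOn_mem ⟨k, hk, rfl⟩
    have hlip := (hkat _ hmem k hk).1
    rwa [Function.invFunOn_eq (f := x) ⟨k, hk, rfl⟩, dist_self, abs_nonpos_iff, sub_eq_zero] at hlip
  obtain ⟨p, hp⟩ := hX.2 (u.image x) f
    (forall_mem_image.2 fun k hk => (hf k hk).symm ▸ hg k hk)
    (forall_mem_image.2 fun k hk => forall_mem_image.2 fun k' hk' => by
      rw [hf k hk, hf k' hk']
      exact hkat k hk k' hk')
  exact ⟨p, fun k hk => (hp _ (mem_image_of_mem x hk)).trans (hf k hk)⟩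

variable {γ : Type*} [PseudoMetricSpace γ]

theorem exists_isTruncatedIsometryOn_insert (hX : IsUrysohnSpace X) [DecidableEq γ]
    {z : γ → X} {u : Finset γ} (hz : IsTruncatedIsometryOn z u) (j : γ) :
    ∃ z' : γ → X, (∀ k ∈ u, z' k = z k) ∧ IsTruncatedIsometryOn z' (insert j u) := by
  obtain ⟨p, hp⟩ := hX.exists_dist_eq_of_katetov u z (fun k => min 1 (dist k j))
    (fun k _ => ⟨by positivity, min_le_left _ _⟩)
    (fun k hk k' hk' => by
      rw [hz k hk k' hk']
      exact ⟨abs_min_one_dist_sub_le k k' j, min_one_dist_le_add k k' j⟩)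
  have hpj : j ∈ u → p = z j := fun hj => dist_eq_zero.1 (by simpa using hp j hj)
  set z' := Function.update z j p
  have hz'u : ∀ k ∈ u, z' k = z k := by
    intro k hk
    by_cases hkj : k = j
    · subst hkj
      simpa [z'] using hpj hk
    · exact Function.update_of_ne hkj p z
  have hp' : ∀ k ∈ insert j u, dist p (z' k) = min 1 (dist k j) := by
    intro k hk
    by_cases hkj : k = j
    · simp [z', hkj]
    · rw [hz'u k ((mem_insert.1 hk).resolve_left hkj)]
      exact hp k ((mem_insert.1 hk).resolve_left hkj)
  refine ⟨z', hz'u, fun k hk k' hk' => ?_⟩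
  by_cases hkj : k = j
  · subst hkj
    simpa [z', dist_comm k'] using hp' k' hk'
  by_cases hk'j : k' = j
  · subst hk'j
    simpa [z', dist_comm] using hp' k hk
  have hku := (mem_insert.1 hk).resolve_left hkj
  have hk'u := (mem_insert.1 hk').resolve_left hk'j
  rw [hz'u k hku, hz'u k' hk'u]
  exact hz k hku k' hk'u

theorem exists_isTruncatedIsometryOn_union (hX : IsUrysohnSpace X) [DecidableEq γ]
    {z : γ → X} {t : Finset γ} (hz : IsTruncatedIsometryOn z t) (s : Finset γ) :
    ∃ z' : γ → X, (∀ k ∈ t, z' k = z k) ∧ IsTruncatedIsometryOn z' (t ∪ s) := by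
  induction s using Finset.induction_on with
  | empty => exact ⟨z, fun _ _ => rfl, by simpa using hz⟩
  | insert j s _ ih =>
    obtain ⟨z', hz't, hz'⟩ := ih
    obtain ⟨z'', hz''u, hz''⟩ := hX.exists_isTruncatedIsometryOn_insert hz' j
    refine ⟨z'', fun k hk => (hz''u k (mem_union_left s hk)).trans (hz't k hk), ?_⟩
    rwa [union_insert]

end IsUrysohnSpace

/-- In an Urysohn space, if `|d(a_i,a_j) − d(b_i,b_j)| ≤ 2ε` for all `i,j`,
then there are points `c_i` with `d(c_i,c_j) = d(b_i,b_j)` and `d(a_i,c_i) ≤ ε`. -/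
theorem stmt_13 {X : Type*} [MetricSpace X] (hX : IsUrysohnSpace X)
    {n : ℕ} (a b : Fin n → X) (ε : ℝ) (hε : 0 ≤ ε)
    (h : ∀ i j, |dist (a i) (a j) - dist (b i) (b j)| ≤ 2 * ε) :
    ∃ c : Fin n → X, (∀ i j, dist (c i) (c j) = dist (b i) (b j)) ∧
      ∀ i, dist (a i) (c i) ≤ ε := by
  classical
  -- The glued distance is only a metric for `0 < ε`; for `ε = 0` take `c = a`.
  rcases hε.eq_or_lt with rfl | hε
  · refine ⟨a, fun i j => ?_, fun i => by simp⟩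
    simpa [sub_eq_zero] using h i j
  rcases isEmpty_or_nonempty (Fin n) with hn | hn
  · exact ⟨b, fun i => isEmptyElim i, fun i => isEmptyElim i⟩
  let _ : MetricSpace (X ⊕ X) := Metric.glueMetricApprox a b ε hε h
  have hinl : ∀ x y : X, dist (Sum.inl x : X ⊕ X) (.inl y) = dist x y := fun _ _ => rfl
  have hinr : ∀ x y : X, dist (Sum.inr x : X ⊕ X) (.inr y) = dist x y := fun _ _ => rfl
  have hmin : ∀ x y : X, min 1 (dist x y) = dist x y := fun x y => min_eq_right (hX.1 x y)
  obtain ⟨z, hza, hz⟩ := hX.exists_isTruncatedIsometryOn_union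
    (z := Sum.elim id id) (t := univ.image (Sum.inl ∘ a))
    (by simp [IsTruncatedIsometryOn, hinl, hmin]) (univ.image (Sum.inr ∘ b))
  have ha : ∀ i, Sum.inl (a i) ∈ univ.image (Sum.inl ∘ a) ∪ univ.image (Sum.inr ∘ b) := by simp
  have hb : ∀ i, Sum.inr (b i) ∈ univ.image (Sum.inl ∘ a) ∪ univ.image (Sum.inr ∘ b) := by simp
  refine ⟨fun i => z (.inr (b i)), fun i j => ?_, fun i => ?_⟩
  · rw [hz _ (hb i) _ (hb j), hinr, hmin]
  · calc dist (a i) (z (.inr (b i)))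
        = dist (z (.inl (a i))) (z (.inr (b i))) := by simp [hza]
      _ = min 1 (dist (Sum.inl (a i) : X ⊕ X) (.inr (b i))) := hz _ (ha i) _ (hb i)
      _ ≤ dist (Sum.inl (a i) : X ⊕ X) (.inr (b i)) := min_le_right _ _
      _ = ε := Metric.glueDist_glued_points a b ε i
end

section
/- Let (M,d) be a metric space of diameter ≤ 1 and let S = [0,1]^{M×M} be equipped with the operation (f ∙ g)(x,y) = inf_{z∈M} min(f(x,z) + g(z,y), 1). Then ∙ is associative, and a function f : M² → [0,1] is bi-Katětov if and only if f ∙ d = d ∙ f = f, f* ∙ f ≥ d, and f ∙ f* ≥ d, where f*(x,y) = f(y,x). Consequently the set Θ of bi-Katětov functions is closed under ∙ and is a monoid with unit d. -/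
/-!
Both sides of the associativity law at `(x, y)` equal the infimum of
`min (f (x, z) + g (z, w) + h (w, y)) 1` over all pairs `(z, w)`: the truncation at `1` passes
through infima because `t ↦ min (a + t) 1` is monotone and continuous, and
`min (min s 1 + c) 1 = min (s + c) 1` for `c ≥ 0`.

For a `[0,1]`-valued `f`, the term `z = y` gives `f ∙ d ≤ f`, so `f ∙ d = f` says that
`f (x, y) ≤ f (x, z) + d (z, y)` for all `z`, i.e. `f (x, ·)` is `1`-Lipschitz; dually for `d ∙ f`.
Since `d ≤ 1`, the truncation is invisible in `d ≤ f* ∙ f` and `d ≤ f ∙ f*`, which are then the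
remaining Katětov inequalities. Closure under `∙` is algebra in the monoid:
`(f ∙ g)* = g* ∙ f*` and `g* ∙ (f* ∙ f) ∙ g ≥ g* ∙ d ∙ g = g* ∙ g ≥ d`.
-/

/-- The operation `(f ∙ g)(x,y) = inf_z min(f(x,z) + g(z,y), 1)`. -/
noncomputable def opK {M : Type*} [MetricSpace M] (f g : M × M → ℝ) : M × M → ℝ :=
  fun p => ⨅ z : M, min (f (p.1, z) + g (z, p.2)) 1

/-- A bi-Katětov function on `M²`: both `f(x,·)` and `f(·,x)` are Katětov for every `x`. -/
def IsBiKatetov {M : Type*} [MetricSpace M] (f : M × M → ℝ) : Prop :=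
  (∀ p, f p ∈ Set.Icc (0 : ℝ) 1) ∧
  (∀ x y z : M, |f (x, y) - f (x, z)| ≤ dist y z ∧ dist y z ≤ f (x, y) + f (x, z)) ∧
  (∀ x y z : M, |f (y, x) - f (z, x)| ≤ dist y z ∧ dist y z ≤ f (y, x) + f (z, x))

open Set

lemma ciInf_comm {α β γ : Type*} [ConditionallyCompleteLattice α] {F : β → γ → α}
    (hF : BddBelow (range fun q : β × γ => F q.1 q.2)) :
    ⨅ b, ⨅ c, F b c = ⨅ c, ⨅ b, F b c := by
  have hF' : BddBelow (range fun q : γ × β => F q.2 q.1) := by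
    rwa [← (Equiv.prodComm γ β).surjective.range_comp] at hF
  calc ⨅ b, ⨅ c, F b c = ⨅ q : β × γ, F q.1 q.2 := (ciInf_prod hF).symm
    _ = ⨅ q : γ × β, F q.2 q.1 := ((Equiv.prodComm γ β).iInf_comp (g := fun q => F q.1 q.2)).symm
    _ = ⨅ c, ⨅ b, F b c := ciInf_prod hF'

lemma min_min_one_add_one {a c : ℝ} (hc : 0 ≤ c) : min (min a 1 + c) 1 = min (a + c) 1 := by
  rw [← min_add_add_right, min_assoc, min_eq_right (le_add_of_nonneg_right hc)]

lemma min_add_ciInf_one {ι : Sort*} [Nonempty ι] (a : ℝ) {b : ι → ℝ} (hb : BddBelow (range b)) :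
    min (a + ⨅ i, b i) 1 = ⨅ i, min (a + b i) 1 :=
  Monotone.map_ciInf_of_continuousAt (f := fun t => min (a + t) 1)
    ((continuous_const.add continuous_id).min continuous_const).continuousAt
    (fun _ _ hst => min_le_min_right 1 (add_le_add_right hst a)) hb

lemma abs_sub_le_dist_iff_le_add_dist {α : Type*} [PseudoMetricSpace α] {u : α → ℝ} :
    (∀ y z, |u y - u z| ≤ dist y z) ↔ ∀ y z, u y ≤ u z + dist z y := by
  refine ⟨fun h y z => ?_, fun h y z => abs_sub_le_iff.2 ⟨?_, ?_⟩⟩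
  · linarith [(abs_sub_le_iff.1 (h y z)).1, dist_comm y z]
  · linarith [h y z, dist_comm y z]
  · linarith [h z y]

section

variable {M : Type*} {f g h : M × M → ℝ}

lemma opK_term_nonneg (hf : 0 ≤ f) (hg : 0 ≤ g) (x y z : M) :
    0 ≤ min (f (x, z) + g (z, y)) 1 :=
  le_min (add_nonneg (hf _) (hg _)) zero_le_one

lemma bddBelow_opK_terms (hf : 0 ≤ f) (hg : 0 ≤ g) (x y : M) :
    BddBelow (range fun z => min (f (x, z) + g (z, y)) 1) :=
  ⟨0, forall_mem_range.2 (opK_term_nonneg hf hg x y)⟩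

variable [MetricSpace M]

lemma opK_apply_le (hf : 0 ≤ f) (hg : 0 ≤ g) (x y z : M) :
    opK f g (x, y) ≤ min (f (x, z) + g (z, y)) 1 :=
  ciInf_le (bddBelow_opK_terms hf hg x y) z

lemma le_opK_apply_iff (hf : 0 ≤ f) (hg : 0 ≤ g) {a : ℝ} (ha : a ≤ 1) (x y : M) :
    a ≤ opK f g (x, y) ↔ ∀ z, a ≤ f (x, z) + g (z, y) := by
  have : Nonempty M := ⟨x⟩
  simp only [opK, le_ciInf_iff (bddBelow_opK_terms hf hg x y), le_min_iff, ha, and_true]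

lemma opK_mem_Icc (hf : 0 ≤ f) (hg : 0 ≤ g) (p : M × M) : opK f g p ∈ Icc 0 1 :=
  ⟨Real.iInf_nonneg (opK_term_nonneg hf hg p.1 p.2),
    (opK_apply_le hf hg p.1 p.2 p.1).trans (min_le_right _ _)⟩

lemma opK_mono {f' g' : M × M → ℝ} (hf : 0 ≤ f) (hg : 0 ≤ g) (hff' : f ≤ f') (hgg' : g ≤ g') :
    opK f g ≤ opK f' g' := fun p =>
  ciInf_mono (bddBelow_opK_terms hf hg p.1 p.2) fun _ =>
    min_le_min_right 1 (add_le_add (hff' _) (hgg' _))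

lemma opK_swap (f g : M × M → ℝ) :
    (fun p => opK f g (p.2, p.1)) = opK (fun p => g (p.2, p.1)) (fun p => f (p.2, p.1)) := by
  funext p
  simp only [opK, add_comm]

lemma opK_opK_apply (hf : 0 ≤ f) (hg : 0 ≤ g) (hh : 0 ≤ h) (x y : M) :
    opK (opK f g) h (x, y) = ⨅ w, ⨅ z, min (f (x, z) + g (z, w) + h (w, y)) 1 := by
  have : Nonempty M := ⟨x⟩
  show ⨅ w, min (opK f g (x, w) + h (w, y)) 1 = _
  refine iInf_congr fun w => ?_
  rw [add_comm, opK, min_add_ciInf_one _ (bddBelow_opK_terms hf hg x w)]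
  exact iInf_congr fun z => by rw [add_comm, min_min_one_add_one (hh _)]

lemma opK_apply_opK (hf : 0 ≤ f) (hg : 0 ≤ g) (hh : 0 ≤ h) (x y : M) :
    opK f (opK g h) (x, y) = ⨅ z, ⨅ w, min (f (x, z) + g (z, w) + h (w, y)) 1 := by
  have : Nonempty M := ⟨x⟩
  show ⨅ z, min (f (x, z) + opK g h (z, y)) 1 = _
  refine iInf_congr fun z => ?_
  rw [opK, min_add_ciInf_one _ (bddBelow_opK_terms hg hh z y)]
  exact iInf_congr fun w => by rw [add_comm, min_min_one_add_one (hf _), add_comm, add_assoc]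

theorem opK_assoc (hf : 0 ≤ f) (hg : 0 ≤ g) (hh : 0 ≤ h) :
    opK (opK f g) h = opK f (opK g h) := by
  funext ⟨x, y⟩
  rw [opK_opK_apply hf hg hh, opK_apply_opK hf hg hh, ciInf_comm]
  exact ⟨0, forall_mem_range.2 fun _ =>
    le_min (add_nonneg (add_nonneg (hf _) (hg _)) (hh _)) zero_le_one⟩

lemma dist_fun_nonneg : 0 ≤ fun p : M × M => dist p.1 p.2 := fun _ => dist_nonneg

lemma opK_nonneg (hf : 0 ≤ f) (hg : 0 ≤ g) : 0 ≤ opK f g := fun p => (opK_mem_Icc hf hg p).1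

lemma opK_dist_le (hf : ∀ p, f p ∈ Icc 0 1) : opK f (fun p => dist p.1 p.2) ≤ f := fun ⟨x, y⟩ => by
  simpa [min_eq_left (hf (x, y)).2] using
    opK_apply_le (fun p => (hf p).1) dist_fun_nonneg x y y

lemma dist_opK_le (hf : ∀ p, f p ∈ Icc 0 1) : opK (fun p => dist p.1 p.2) f ≤ f := fun ⟨x, y⟩ => by
  simpa [min_eq_left (hf (x, y)).2] using
    opK_apply_le dist_fun_nonneg (fun p => (hf p).1) x y x

lemma opK_dist_eq_self_iff (hf : ∀ p, f p ∈ Icc 0 1) :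
    opK f (fun p => dist p.1 p.2) = f ↔ ∀ x y z, f (x, y) ≤ f (x, z) + dist z y := by
  rw [← (opK_dist_le hf).ge_iff_eq]
  simp only [Pi.le_def, Prod.forall,
    le_opK_apply_iff (fun p => (hf p).1) dist_fun_nonneg (hf _).2]

lemma dist_opK_eq_self_iff (hf : ∀ p, f p ∈ Icc 0 1) :
    opK (fun p => dist p.1 p.2) f = f ↔ ∀ x y z, f (x, y) ≤ dist x z + f (z, y) := by
  rw [← (dist_opK_le hf).ge_iff_eq]
  simp only [Pi.le_def, Prod.forall,
    le_opK_apply_iff dist_fun_nonneg (fun p => (hf p).1) (hf _).2]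

lemma dist_le_opK_iff (hdiam : ∀ x y : M, dist x y ≤ 1) (hf : 0 ≤ f) (hg : 0 ≤ g) :
    (fun p : M × M => dist p.1 p.2) ≤ opK f g ↔ ∀ x y z, dist x y ≤ f (x, z) + g (z, y) := by
  simp only [Pi.le_def, Prod.forall, le_opK_apply_iff hf hg (hdiam _ _)]

lemma isBiKatetov_iff : IsBiKatetov f ↔ (∀ p, f p ∈ Icc 0 1) ∧
    (∀ x y z, f (x, y) ≤ f (x, z) + dist z y) ∧ (∀ x y z, f (x, y) ≤ dist x z + f (z, y)) ∧
    (∀ x y z, dist x y ≤ f (z, x) + f (z, y)) ∧ (∀ x y z, dist x y ≤ f (x, z) + f (y, z)) := by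
  simp only [IsBiKatetov, forall_and,
    forall_congr' fun x => abs_sub_le_dist_iff_le_add_dist (u := fun y => f (x, y)),
    forall_congr' fun x => abs_sub_le_dist_iff_le_add_dist (u := fun y => f (y, x))]
  exact ⟨fun ⟨h0, ⟨h1, h2⟩, h3, h4⟩ => ⟨h0, h1,
      fun x y z => by linarith [h3 y x z, dist_comm x z], fun x y z => h2 z x y,
      fun x y z => h4 z x y⟩,
    fun ⟨h0, h1, h3, h2, h4⟩ => ⟨h0, ⟨h1, fun x y z => h2 y z x⟩,
      fun x y z => by linarith [h3 y x z, dist_comm y z], fun x y z => h4 y z x⟩⟩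

theorem isBiKatetov_iff_opK (hdiam : ∀ x y : M, dist x y ≤ 1) (hf : ∀ p, f p ∈ Icc 0 1) :
    IsBiKatetov f ↔ opK f (fun p => dist p.1 p.2) = f ∧ opK (fun p => dist p.1 p.2) f = f ∧
      (fun p : M × M => dist p.1 p.2) ≤ opK (fun p => f (p.2, p.1)) f ∧
      (fun p : M × M => dist p.1 p.2) ≤ opK f (fun p => f (p.2, p.1)) := by
  have hf0 : 0 ≤ f := fun p => (hf p).1
  have hf0' : 0 ≤ fun p : M × M => f (p.2, p.1) := fun p => hf0 (p.2, p.1)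
  rw [isBiKatetov_iff, and_iff_right hf, opK_dist_eq_self_iff hf, dist_opK_eq_self_iff hf,
    dist_le_opK_iff hdiam hf0' hf0, dist_le_opK_iff hdiam hf0 hf0']

theorem isBiKatetov_opK (hdiam : ∀ x y : M, dist x y ≤ 1) (hf : IsBiKatetov f)
    (hg : IsBiKatetov g) : IsBiKatetov (opK f g) := by
  have hf0 : 0 ≤ f := fun p => (hf.1 p).1
  have hg0 : 0 ≤ g := fun p => (hg.1 p).1
  have hf0' : 0 ≤ fun p : M × M => f (p.2, p.1) := fun p => hf0 (p.2, p.1)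
  have hg0' : 0 ≤ fun p : M × M => g (p.2, p.1) := fun p => hg0 (p.2, p.1)
  obtain ⟨hfd, hdf, hff, hff'⟩ := (isBiKatetov_iff_opK hdiam hf.1).1 hf
  obtain ⟨hgd, hdg, hgg, hgg'⟩ := (isBiKatetov_iff_opK hdiam hg.1).1 hg
  have hdf' : opK (fun p : M × M => dist p.1 p.2) (fun p => f (p.2, p.1)) =
      fun p => f (p.2, p.1) := by
    simpa [hfd, dist_comm] using (opK_swap f fun p : M × M => dist p.1 p.2).symm
  rw [isBiKatetov_iff_opK hdiam (opK_mem_Icc hf0 hg0), opK_swap]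
  refine ⟨by rw [opK_assoc hf0 hg0 dist_fun_nonneg, hgd],
    by rw [← opK_assoc dist_fun_nonneg hf0 hg0, hdf], ?_, ?_⟩
  · calc _ ≤ _ := hgg
      _ = _ := by rw [hdg]
      _ ≤ opK _ (opK (opK _ f) g) := opK_mono hg0' (opK_nonneg dist_fun_nonneg hg0) le_rfl
          (opK_mono dist_fun_nonneg hg0 hff le_rfl)
      _ = _ := by rw [opK_assoc hf0' hf0 hg0, opK_assoc hg0' hf0' (opK_nonneg hf0 hg0)]
  · calc _ ≤ _ := hff'
      _ = _ := by rw [hdf']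
      _ ≤ opK f (opK (opK g _) _) := opK_mono hf0 (opK_nonneg dist_fun_nonneg hf0') le_rfl
          (opK_mono dist_fun_nonneg hf0' hgg' le_rfl)
      _ = _ := by rw [opK_assoc hg0 hg0' hf0', opK_assoc hf0 hg0 (opK_nonneg hg0' hf0')]

end

/-- `∙` is associative on `[0,1]`-valued functions on `M²`; a `[0,1]`-valued
function `f` is bi-Katětov iff `f ∙ d = d ∙ f = f`, `f* ∙ f ≥ d`, `f ∙ f* ≥ d`; hence the
set of bi-Katětov functions is closed under `∙` and is a monoid with unit `d`. -/
theorem stmt_14 {M : Type*} [MetricSpace M] (hdiam : ∀ x y : M, dist x y ≤ 1) :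
    (∀ f g h : M × M → ℝ, (∀ p, f p ∈ Set.Icc (0 : ℝ) 1) →
      (∀ p, g p ∈ Set.Icc (0 : ℝ) 1) → (∀ p, h p ∈ Set.Icc (0 : ℝ) 1) →
      opK (opK f g) h = opK f (opK g h)) ∧
    (∀ f : M × M → ℝ, (∀ p, f p ∈ Set.Icc (0 : ℝ) 1) →
      (IsBiKatetov f ↔
        (opK f (fun p => dist p.1 p.2) = f ∧
         opK (fun p => dist p.1 p.2) f = f ∧
         (fun p : M × M => dist p.1 p.2) ≤ opK (fun p => f (p.2, p.1)) f ∧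
         (fun p : M × M => dist p.1 p.2) ≤ opK f (fun p => f (p.2, p.1))))) ∧
    ∀ f g : M × M → ℝ, IsBiKatetov f → IsBiKatetov g → IsBiKatetov (opK f g) :=
  ⟨fun _ _ _ hf hg hh => opK_assoc (fun p => (hf p).1) (fun p => (hg p).1) (fun p => (hh p).1),
    fun _ => isBiKatetov_iff_opK hdiam, fun _ _ => isBiKatetov_opK hdiam⟩
end

section
/- Let Θ be the set of bi-Katětov functions on M² (M a complete metric space of diameter ≤ 1), a compact subset of [0,1]^{M×M}, and let S be a closed subsemigroup of Θ under the operation (f ∙ g)(x,y) = inf_z min(f(x,z)+g(z,y),1). If the set T = {f ∈ S : f ≥ d} is non-empty, then T has a greatest element p, and p is an idempotent: p ∙ p = p. -/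
/-- If `S` is a closed subsemigroup of the compact semigroup `Θ` of bi-Katětov
functions and `T = {f ∈ S : f ≥ d}` is non-empty, then `T` has a greatest element `p`,
which is an idempotent. -/
theorem stmt_15 {M : Type*} [MetricSpace M] [CompleteSpace M]
    (hdiam : ∀ x y : M, dist x y ≤ 1)
    (S : Set (M × M → ℝ)) (hSb : ∀ f ∈ S, IsBiKatetov f)
    (hSc : IsClosed S) (hSm : ∀ f ∈ S, ∀ g ∈ S, opK f g ∈ S)
    (hT : ∃ f ∈ S, (fun p : M × M => dist p.1 p.2) ≤ f) :
    ∃ p ∈ S, (fun q : M × M => dist q.1 q.2) ≤ p ∧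
      (∀ f ∈ S, (fun q : M × M => dist q.1 q.2) ≤ f → f ≤ p) ∧
      opK p p = p := by
  obtain ⟨f₀, hf₀S, hf₀d⟩ := hT
  rcases isEmpty_or_nonempty M with hM | hM
  · refine ⟨f₀, hf₀S, hf₀d, fun f _ _ q => (hM.false q.1).elim, funext fun q => (hM.false q.1).elim⟩
  set T : Set (M × M → ℝ) := {f | f ∈ S ∧ (fun q : M × M => dist q.1 q.2) ≤ f} with hTdef
  have hub : ∀ f ∈ S, ∀ q, f q ≤ 1 := fun f hf q => ((hSb f hf).1 q).2
  -- products of members of T dominate both factors and `d`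
  have hopd : ∀ f ∈ T, ∀ g ∈ T, (fun q : M × M => dist q.1 q.2) ≤ opK f g := by
    rintro f hf g hg ⟨x, y⟩
    refine le_ciInf fun z => le_min ((dist_triangle x z y).trans ?_) (hdiam _ _)
    exact add_le_add (hf.2 (x, z)) (hg.2 (z, y))
  have hopf : ∀ f ∈ T, ∀ g ∈ T, f ≤ opK f g := by
    rintro f hf g hg ⟨x, y⟩
    refine le_ciInf fun z => le_min ?_ (hub f hf.1 (x, y))
    have h1 := (abs_le.1 ((hSb f hf.1).2.1 x y z).1).2
    have h2 : dist z y ≤ g (z, y) := hg.2 (z, y)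
    have h3 : dist y z = dist z y := dist_comm y z
    show f (x, y) ≤ f (x, z) + g (z, y)
    linarith
  have hopg : ∀ f ∈ T, ∀ g ∈ T, g ≤ opK f g := by
    rintro f hf g hg ⟨x, y⟩
    refine le_ciInf fun z => le_min ?_ (hub g hg.1 (x, y))
    have h1 := (abs_le.1 ((hSb g hg.1).2.2 y x z).1).2
    have h2 : dist x z ≤ f (x, z) := hf.2 (x, z)
    show g (x, y) ≤ f (x, z) + g (z, y)
    linarith
  have hTne : T.Nonempty := ⟨f₀, hf₀S, hf₀d⟩
  haveI : Nonempty T := hTne.to_subtype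
  haveI : IsDirected T (· ≤ ·) := ⟨fun f g =>
    ⟨⟨opK f g, hSm _ f.2.1 _ g.2.1, hopd _ f.2 _ g.2⟩, hopf _ f.2 _ g.2, hopg _ f.2 _ g.2⟩⟩
  haveI : (Filter.atTop : Filter T).NeBot := Filter.atTop_neBot_iff.2 ⟨‹_›, ‹_›⟩
  set p : M × M → ℝ := fun q => ⨆ f : T, (f : M × M → ℝ) q with hpdef
  have hbdd : ∀ q, BddAbove (Set.range fun f : T => (f : M × M → ℝ) q) := fun q =>
    ⟨1, by rintro x ⟨f, rfl⟩; exact hub f f.2.1 q⟩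
  have htend : Filter.Tendsto (fun f : T => (f : M × M → ℝ)) Filter.atTop (nhds p) := by
    rw [tendsto_pi_nhds]
    intro q
    exact tendsto_atTop_ciSup (fun f g h => h q) (hbdd q)
  have hpS : p ∈ S := hSc.mem_of_tendsto htend (Filter.Eventually.of_forall fun f => f.2.1)
  have hge : ∀ f ∈ T, f ≤ p := fun f hf q => le_ciSup (hbdd q) (⟨f, hf⟩ : T)
  have hpd : (fun q : M × M => dist q.1 q.2) ≤ p := fun q =>
    (hf₀d q).trans (hge f₀ ⟨hf₀S, hf₀d⟩ q)
  have hpT : p ∈ T := ⟨hpS, hpd⟩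
  have hppT : opK p p ∈ T := ⟨hSm p hpS p hpS, hopd p hpT p hpT⟩
  exact ⟨p, hpS, hpd, fun f hf hfd => hge f ⟨hf, hfd⟩,
    le_antisymm (hge _ hppT) (hopf p hpT p hpT)⟩
end

section
/- Let (M,d) be a complete metric space of diameter ≤ 1, G = Iso(M), and Θ the monoid of bi-Katětov functions on M² under ∙. Define i : G → Θ by i(φ)(x,y) = d(x, φ(y)). Then i is an injective monoid homomorphism preserving the involution (i(φ⁻¹) = i(φ)*), it is a homeomorphic embedding for the pointwise topologies, and the set of invertible elements of the monoid Θ is exactly i(G). -/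
lemma biK_of_iso {M : Type*} [MetricSpace M] (hdiam : ∀ x y : M, dist x y ≤ 1)
    (φ : M ≃ᵢ M) : IsBiKatetov (fun p : M × M => dist p.1 (φ p.2)) := by
  refine ⟨fun p => ⟨dist_nonneg, hdiam _ _⟩, fun x y z => ⟨?_, ?_⟩, fun x y z => ⟨?_, ?_⟩⟩
  · have h := abs_dist_sub_le (φ y) (φ z) x
    rw [dist_comm (φ y) x, dist_comm (φ z) x, φ.dist_eq] at h
    exact h
  · calc dist y z = dist (φ y) (φ z) := (φ.dist_eq y z).symm
      _ ≤ dist (φ y) x + dist x (φ z) := dist_triangle _ _ _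
      _ = dist x (φ y) + dist x (φ z) := by rw [dist_comm (φ y) x]
  · exact abs_dist_sub_le y z (φ x)
  · calc dist y z ≤ dist y (φ x) + dist (φ x) z := dist_triangle _ _ _
      _ = dist y (φ x) + dist z (φ x) := by rw [dist_comm (φ x) z]

lemma opK_dist {M : Type*} [MetricSpace M] (hdiam : ∀ x y : M, dist x y ≤ 1)
    (φ ψ : M ≃ᵢ M) :
    opK (fun p : M × M => dist p.1 (φ p.2)) (fun p : M × M => dist p.1 (ψ p.2)) =
      fun p : M × M => dist p.1 (φ (ψ p.2)) := by
  funext p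
  have hbdd : BddBelow (Set.range fun z : M =>
      min (dist p.1 (φ z) + dist z (ψ p.2)) 1) := by
    refine ⟨0, ?_⟩
    rintro r ⟨z, rfl⟩
    exact le_min (by positivity) one_pos.le
  have : Nonempty M := ⟨p.1⟩
  show (⨅ z : M, min (dist p.1 (φ z) + dist z (ψ p.2)) 1) = dist p.1 (φ (ψ p.2))
  apply le_antisymm
  · calc (⨅ z : M, min (dist p.1 (φ z) + dist z (ψ p.2)) 1)
        ≤ min (dist p.1 (φ (ψ p.2)) + dist (ψ p.2) (ψ p.2)) 1 :=
        ciInf_le hbdd (ψ p.2)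
      _ = dist p.1 (φ (ψ p.2)) := by
        rw [dist_self, add_zero, min_eq_left (hdiam _ _)]
  · refine le_ciInf fun z => le_min ?_ (hdiam _ _)
    calc dist p.1 (φ (ψ p.2)) ≤ dist p.1 (φ z) + dist (φ z) (φ (ψ p.2)) :=
        dist_triangle _ _ _
      _ = dist p.1 (φ z) + dist z (ψ p.2) := by rw [φ.dist_eq]

lemma eq_dist_of_zero {M : Type*} [MetricSpace M] {f : M × M → ℝ} (hf : IsBiKatetov f)
    {w y : M} (hw : f (w, y) = 0) : ∀ x, f (x, y) = dist x w := by
  intro x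
  have h1 := (hf.2.2 y x w).1
  have h2 := (hf.2.2 y x w).2
  rw [hw] at h1 h2
  rw [sub_zero] at h1
  rw [add_zero] at h2
  exact le_antisymm (le_of_abs_le h1) h2

lemma exists_zero {M : Type*} [MetricSpace M] [CompleteSpace M] {f g : M × M → ℝ}
    (hf : IsBiKatetov f) (hg : IsBiKatetov g)
    (hgf : opK g f = fun p : M × M => dist p.1 p.2) (y : M) : ∃ w, f (w, y) = 0 := by
  have : Nonempty M := ⟨y⟩
  have h0 : (⨅ z : M, min (g (y, z) + f (z, y)) 1) = 0 := by
    have := congrFun hgf (y, y)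
    simpa [opK] using this
  have hseq : ∀ n : ℕ, ∃ z : M, f (z, y) < 1 / ((n:ℝ) + 1) := by
    intro n
    have hpos : (0 : ℝ) < min (1 / ((n:ℝ) + 1)) 1 := lt_min (by positivity) one_pos
    obtain ⟨z, hz⟩ := exists_lt_of_ciInf_lt (h0 ▸ hpos)
    refine ⟨z, ?_⟩
    have hlt : g (y, z) + f (z, y) < 1 / ((n:ℝ) + 1) := by
      rcases lt_or_ge (g (y, z) + f (z, y)) 1 with h | h
      · have := hz.trans_le (min_le_left _ _)
        rwa [min_eq_left h.le] at this
      · exact absurd (hz.trans_le (min_le_right _ _)) (by rw [min_eq_right h]; exact lt_irrefl 1)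
    have := (hg.1 (y, z)).1
    linarith
  choose z hz using hseq
  have hcauchy : CauchySeq z := by
    apply cauchySeq_of_le_tendsto_0 (fun n : ℕ => 2 / ((n:ℝ) + 1))
    · intro n m N hn hm
      have h1 : f (z n, y) < 1 / ((N:ℝ) + 1) :=
        (hz n).trans_le (by
          apply one_div_le_one_div_of_le (by positivity)
          exact_mod_cast by omega)
      have h2 : f (z m, y) < 1 / ((N:ℝ) + 1) :=
        (hz m).trans_le (by
          apply one_div_le_one_div_of_le (by positivity)
          exact_mod_cast by omega)
      have h3 := (hf.2.2 y (z n) (z m)).2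
      have : (2 : ℝ) / ((N:ℝ) + 1) = 1 / ((N:ℝ) + 1) + 1 / ((N:ℝ) + 1) := by ring
      linarith
    · have := tendsto_one_div_add_atTop_nhds_zero_nat.const_mul (2 : ℝ)
      simp only [mul_zero] at this
      convert this using 2 with n
      ring
  obtain ⟨w, hw⟩ := cauchySeq_tendsto_of_complete hcauchy
  refine ⟨w, le_antisymm ?_ (hf.1 (w, y)).1⟩
  have hle : ∀ n, f (w, y) ≤ dist w (z n) + f (z n, y) := by
    intro n
    have := (hf.2.2 y w (z n)).1
    have h := le_of_abs_le this
    linarith [sub_le_iff_le_add.mp h]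
  have hlim : Filter.Tendsto (fun n => dist w (z n) + f (z n, y)) Filter.atTop (nhds 0) := by
    have h1 : Filter.Tendsto (fun n => dist w (z n)) Filter.atTop (nhds 0) := by
      have := tendsto_iff_dist_tendsto_zero.1 hw
      simpa [dist_comm] using this
    have h2 : Filter.Tendsto (fun n => f (z n, y)) Filter.atTop (nhds 0) := by
      apply squeeze_zero (fun n => (hf.1 (z n, y)).1) (fun n => (hz n).le)
      exact tendsto_one_div_add_atTop_nhds_zero_nat
    simpa using h1.add h2
  exact ge_of_tendsto' hlim hle

lemma exists_iso {M : Type*} [MetricSpace M] [CompleteSpace M] {f g : M × M → ℝ}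
    (hf : IsBiKatetov f) (hg : IsBiKatetov g)
    (hfg : opK f g = fun p : M × M => dist p.1 p.2)
    (hgf : opK g f = fun p : M × M => dist p.1 p.2) :
    ∃ φ : M ≃ᵢ M, f = fun p : M × M => dist p.1 (φ p.2) := by
  choose φ0 hφ0 using fun y => exists_zero hf hg hgf y
  choose ψ0 hψ0 using fun y => exists_zero hg hf hfg y
  have hfd : ∀ x y, f (x, y) = dist x (φ0 y) := fun x y => eq_dist_of_zero hf (hφ0 y) x
  have hgd : ∀ x y, g (x, y) = dist x (ψ0 y) := fun x y => eq_dist_of_zero hg (hψ0 y) x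
  have right_inv : ∀ y, φ0 (ψ0 y) = y := by
    intro y
    have hne : Nonempty M := ⟨y⟩
    have h := congrFun hfg (φ0 (ψ0 y), y)
    simp only [opK] at h
    have hb : BddBelow (Set.range fun z => min (f (φ0 (ψ0 y), z) + g (z, y)) 1) :=
      ⟨0, by rintro r ⟨z, rfl⟩; exact le_min (add_nonneg (hf.1 _).1 (hg.1 _).1) one_pos.le⟩
    have hle := ciInf_le hb (ψ0 y)
    rw [h] at hle
    have h1 : f (φ0 (ψ0 y), ψ0 y) = 0 := by rw [hfd]; exact dist_self _
    have h2 : g (ψ0 y, y) = 0 := by rw [hgd]; exact dist_self _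
    rw [h1, h2] at hle
    simp only [add_zero, min_eq_left (zero_le_one)] at hle
    exact dist_le_zero.1 hle
  have left_inv : ∀ y, ψ0 (φ0 y) = y := by
    intro y
    have hne : Nonempty M := ⟨y⟩
    have h := congrFun hgf (ψ0 (φ0 y), y)
    simp only [opK] at h
    have hb : BddBelow (Set.range fun z => min (g (ψ0 (φ0 y), z) + f (z, y)) 1) :=
      ⟨0, by rintro r ⟨z, rfl⟩; exact le_min (add_nonneg (hg.1 _).1 (hf.1 _).1) one_pos.le⟩
    have hle := ciInf_le hb (φ0 y)
    rw [h] at hle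
    have h1 : g (ψ0 (φ0 y), φ0 y) = 0 := by rw [hgd]; exact dist_self _
    have h2 : f (φ0 y, y) = 0 := by rw [hfd]; exact dist_self _
    rw [h1, h2] at hle
    simp only [add_zero, min_eq_left (zero_le_one)] at hle
    exact dist_le_zero.1 hle
  have nonexpφ : ∀ a b, dist (φ0 a) (φ0 b) ≤ dist a b := by
    intro a b
    have h := (hf.2.1 (φ0 a) b a).1
    rw [hfd, hfd, dist_self, sub_zero, abs_of_nonneg dist_nonneg, dist_comm b a] at h
    exact h
  have nonexpψ : ∀ a b, dist (ψ0 a) (ψ0 b) ≤ dist a b := by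
    intro a b
    have h := (hg.2.1 (ψ0 a) b a).1
    rw [hgd, hgd, dist_self, sub_zero, abs_of_nonneg dist_nonneg, dist_comm b a] at h
    exact h
  have isom : ∀ a b, dist (φ0 a) (φ0 b) = dist a b := by
    intro a b
    refine le_antisymm (nonexpφ a b) ?_
    have := nonexpψ (φ0 a) (φ0 b)
    rwa [left_inv, left_inv] at this
  exact ⟨⟨⟨φ0, ψ0, left_inv, right_inv⟩, Isometry.of_dist_eq isom⟩,
    funext fun p => hfd p.1 p.2⟩

lemma inducing_aux {M : Type*} [MetricSpace M] :
    @Continuous (M ≃ᵢ M) (M → M)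
      (TopologicalSpace.induced
        (fun (φ : M ≃ᵢ M) (p : M × M) => dist p.1 (φ p.2)) Pi.topologicalSpace)
      Pi.topologicalSpace (fun φ x => φ x) := by
  set T : TopologicalSpace (M ≃ᵢ M) := TopologicalSpace.induced
    (fun (φ : M ≃ᵢ M) (p : M × M) => dist p.1 (φ p.2)) Pi.topologicalSpace with hT
  refine @continuous_pi _ _ _ T _ _ fun y => ?_
  rw [@continuous_iff_continuousAt _ _ T _]
  intro φ₀
  have hi : @Continuous _ _ T _ (fun (φ : M ≃ᵢ M) (p : M × M) => dist p.1 (φ p.2)) :=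
    continuous_induced_dom
  have hc : @Continuous _ _ T _ (fun φ : M ≃ᵢ M => dist (φ₀ y) (φ y)) :=
    (continuous_apply ((φ₀ y, y) : M × M)).comp hi
  have h2 := hc.tendsto φ₀
  rw [dist_self] at h2
  exact tendsto_iff_dist_tendsto_zero.2 (by simpa [dist_comm] using h2)

/-- The map `i(φ)(x,y) = d(x, φ(y))` from `G = Iso(M)` to the monoid `Θ` of
bi-Katětov functions is an injective monoid homomorphism preserving the involution, a
homeomorphic (inducing) embedding, and its range is exactly the set of invertible elements
of `Θ`. -/
theorem stmt_17 {M : Type*} [MetricSpace M] [CompleteSpace M]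
    (hdiam : ∀ x y : M, dist x y ≤ 1) :
    Function.Injective (fun (φ : M ≃ᵢ M) (p : M × M) => dist p.1 (φ p.2)) ∧
    (fun p : M × M => dist p.1 ((1 : M ≃ᵢ M) p.2)) = (fun p : M × M => dist p.1 p.2) ∧
    (∀ φ ψ : M ≃ᵢ M, (fun p : M × M => dist p.1 ((φ * ψ) p.2)) =
      opK (fun p : M × M => dist p.1 (φ p.2)) (fun p : M × M => dist p.1 (ψ p.2))) ∧
    (∀ φ : M ≃ᵢ M, (fun p : M × M => dist p.1 (φ⁻¹ p.2)) =
      fun p : M × M => dist p.2 (φ p.1)) ∧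
    Topology.IsInducing (fun (φ : M ≃ᵢ M) (p : M × M) => dist p.1 (φ p.2)) ∧
    ∀ f : M × M → ℝ, IsBiKatetov f →
      ((∃ g : M × M → ℝ, IsBiKatetov g ∧
          opK f g = (fun p : M × M => dist p.1 p.2) ∧
          opK g f = (fun p : M × M => dist p.1 p.2)) ↔
        ∃ φ : M ≃ᵢ M, f = fun p : M × M => dist p.1 (φ p.2)) := by
  have heasy : Continuous (fun (φ : M ≃ᵢ M) (p : M × M) => dist p.1 (φ p.2)) := by
    apply continuous_pi
    intro p
    exact continuous_const.dist ((continuous_apply p.2).comp continuous_induced_dom)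
  refine ⟨?_, ?_, ?_, ?_, ?_, ?_⟩
  · intro φ ψ h
    refine IsometryEquiv.ext fun y => ?_
    have h1 := congrFun h (φ y, y)
    simp only [dist_self] at h1
    exact (eq_of_dist_eq_zero h1.symm).symm ▸ rfl
  · funext p
    rfl
  · intro φ ψ
    exact (opK_dist hdiam φ ψ).symm
  · intro φ
    funext p
    rw [← IsometryEquiv.dist_eq φ p.1 (φ⁻¹ p.2)]
    simp [dist_comm]
  · refine ⟨le_antisymm ?_ ?_⟩
    · exact continuous_iff_le_induced.mp heasy
    · exact continuous_iff_le_induced.mp inducing_aux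
  · intro f hf
    constructor
    · rintro ⟨g, hg, hfg, hgf⟩
      exact exists_iso hf hg hfg hgf
    · rintro ⟨φ, rfl⟩
      refine ⟨fun p => dist p.1 (φ⁻¹ p.2), biK_of_iso hdiam φ⁻¹, ?_, ?_⟩
      · rw [opK_dist hdiam φ φ⁻¹]
        funext p
        show dist p.1 (φ (φ.symm p.2)) = dist p.1 p.2
        rw [φ.apply_symm_apply]
      · rw [opK_dist hdiam φ⁻¹ φ]
        funext p
        show dist p.1 (φ.symm (φ p.2)) = dist p.1 p.2
        rw [φ.symm_apply_apply]
end

section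
/- If L is a complete metric space, then the topological group Iso(L) of all surjective self-isometries of L, with the topology of pointwise convergence, is Raikov-complete (complete with respect to its two-sided uniformity). -/
/-!
A two-sided Cauchy filter `F` on `Iso(L)` is pointwise Cauchy, and so is its image under
inversion, because `d(g x, h x) = d(x, (g⁻¹ h) x)` and `d(g⁻¹ x, h⁻¹ x) = d((h g⁻¹) x, x)`.
By completeness of `L` both have pointwise limits `f` and `j`; these preserve distances and are
mutually inverse, so they define an isometry `φ` with `F → φ` pointwise. Translating by `φ⁻¹` on
either side is continuous for pointwise convergence, hence `F` converges to `φ` in the two-sided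
uniformity.
-/

open Filter

open Topology

namespace IsometryEquiv

variable {X : Type*} [MetricSpace X] {α : Type*} {l : Filter α} {u : α → X ≃ᵢ X}

theorem dist_inv_apply (e : X ≃ᵢ X) (x y : X) : dist (e⁻¹ x) y = dist x (e y) := by
  rw [← e.dist_eq, apply_inv_self]

theorem tendsto_nhds_iff_forall_tendsto_apply {g : X ≃ᵢ X} :
    Tendsto u l (𝓝 g) ↔ ∀ x, Tendsto (fun a => u a x) l (𝓝 (g x)) := by
  rw [nhds_induced, tendsto_comap_iff, tendsto_pi_nhds]
  rfl

theorem tendsto_inv_nhds_one (h : Tendsto u l (𝓝 1)) :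
    Tendsto (fun a => (u a)⁻¹) l (𝓝 1) := by
  rw [tendsto_nhds_iff_forall_tendsto_apply] at h ⊢
  refine fun x => tendsto_iff_dist_tendsto_zero.2 ?_
  simpa only [coe_one, id, dist_inv_apply, dist_comm x] using tendsto_iff_dist_tendsto_zero.1 (h x)

theorem tendsto_const_mul {g : X ≃ᵢ X} (h : Tendsto u l (𝓝 g)) (k : X ≃ᵢ X) :
    Tendsto (fun a => k * u a) l (𝓝 (k * g)) := by
  rw [tendsto_nhds_iff_forall_tendsto_apply] at h ⊢
  exact fun x => (k.continuous.tendsto _).comp (h x)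

theorem tendsto_mul_const {g : X ≃ᵢ X} (h : Tendsto u l (𝓝 g)) (k : X ≃ᵢ X) :
    Tendsto (fun a => u a * k) l (𝓝 (g * k)) := by
  rw [tendsto_nhds_iff_forall_tendsto_apply] at h ⊢
  exact fun x => h (k x)

theorem cauchy_map_apply_of_tendsto_inv_mul [l.NeBot]
    (h : Tendsto (fun p : α × α => (u p.1)⁻¹ * u p.2) (l ×ˢ l) (𝓝 1)) (x : X) :
    Cauchy (map (fun a => u a x) l) := by
  rw [cauchy_map_iff', tendsto_uniformity_iff_dist_tendsto_zero]
  have hx := tendsto_iff_dist_tendsto_zero.1 (tendsto_nhds_iff_forall_tendsto_apply.1 h x)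
  simp only [mul_apply, coe_one, id, dist_inv_apply] at hx
  simpa only [dist_comm] using hx

theorem isometry_of_tendsto_apply [l.NeBot] {f : X → X}
    (hf : ∀ x, Tendsto (fun a => u a x) l (𝓝 (f x))) : Isometry f :=
  Isometry.of_dist_eq fun x y => tendsto_nhds_unique ((hf x).dist (hf y)) <| by
    simpa only [IsometryEquiv.dist_eq] using tendsto_const_nhds

theorem leftInverse_of_tendsto_apply [l.NeBot] {f j : X → X}
    (hf : ∀ x, Tendsto (fun a => u a x) l (𝓝 (f x)))
    (hj : ∀ x, Tendsto (fun a => (u a)⁻¹ x) l (𝓝 (j x))) :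
    Function.LeftInverse j f := by
  intro x
  refine tendsto_nhds_unique (hj (f x)) (tendsto_iff_dist_tendsto_zero.2 ?_)
  simpa only [dist_inv_apply, dist_comm (f x)] using tendsto_iff_dist_tendsto_zero.1 (hf x)

theorem exists_tendsto_of_tendsto_inv_mul_of_tendsto_mul_inv [CompleteSpace X] [l.NeBot]
    (hL : Tendsto (fun p : α × α => (u p.1)⁻¹ * u p.2) (l ×ˢ l) (𝓝 1))
    (hR : Tendsto (fun p : α × α => u p.2 * (u p.1)⁻¹) (l ×ˢ l) (𝓝 1)) :
    ∃ φ : X ≃ᵢ X, Tendsto u l (𝓝 φ) := by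
  have hR' : Tendsto (fun p : α × α => (u p.1)⁻¹⁻¹ * (u p.2)⁻¹) (l ×ˢ l) (𝓝 1) := by
    simpa only [mul_inv_rev] using tendsto_inv_nhds_one hR
  have hf : ∀ x, ∃ y, Tendsto (fun a => u a x) l (𝓝 y) := fun x =>
    CompleteSpace.complete (cauchy_map_apply_of_tendsto_inv_mul hL x)
  have hj : ∀ x, ∃ y, Tendsto (fun a => (u a)⁻¹ x) l (𝓝 y) := fun x =>
    CompleteSpace.complete (cauchy_map_apply_of_tendsto_inv_mul (u := fun a => (u a)⁻¹) hR' x)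
  choose f hf using hf
  choose j hj using hj
  have hf' : ∀ x, Tendsto (fun a => (u a)⁻¹⁻¹ x) l (𝓝 (f x)) := by
    simpa only [inv_inv] using hf
  let φ : X ≃ᵢ X :=
    { toFun := f
      invFun := j
      left_inv := leftInverse_of_tendsto_apply hf hj
      right_inv := leftInverse_of_tendsto_apply (u := fun a => (u a)⁻¹) hj hf'
      isometry_toFun := isometry_of_tendsto_apply hf }
  exact ⟨φ, tendsto_nhds_iff_forall_tendsto_apply.2 hf⟩

end IsometryEquiv

/-- If `L` is a complete metric space, then `Iso(L)` with the topology of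
pointwise convergence is Raikov-complete, i.e. complete with respect to its two-sided
uniformity (whose uniformity filter is the infimum of the left and right uniformity
filters). -/
theorem stmt_18 {L : Type*} [MetricSpace L] [CompleteSpace L]
    (U : UniformSpace (L ≃ᵢ L))
    (hU : @uniformity (L ≃ᵢ L) U =
      comap (fun p : (L ≃ᵢ L) × (L ≃ᵢ L) => p.1⁻¹ * p.2) (nhds 1) ⊓
      comap (fun p : (L ≃ᵢ L) × (L ≃ᵢ L) => p.2 * p.1⁻¹) (nhds 1)) :
    @CompleteSpace (L ≃ᵢ L) U := by
  refine ⟨fun {F} hF => ?_⟩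
  obtain ⟨hne, hLR⟩ := hF
  rw [hU, le_inf_iff, ← tendsto_iff_comap, ← tendsto_iff_comap] at hLR
  obtain ⟨φ, hφ⟩ :=
    IsometryEquiv.exists_tendsto_of_tendsto_inv_mul_of_tendsto_mul_inv (u := id) hLR.1 hLR.2
  refine ⟨φ, ?_⟩
  rw [@nhds_eq_comap_uniformity _ U, hU, comap_inf, comap_comap, comap_comap, le_inf_iff,
    ← tendsto_iff_comap, ← tendsto_iff_comap]
  have hφL := IsometryEquiv.tendsto_const_mul hφ φ⁻¹
  have hφR := IsometryEquiv.tendsto_mul_const hφ φ⁻¹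
  rw [inv_mul_cancel] at hφL
  rw [mul_inv_cancel] at hφR
  exact ⟨hφL, hφR⟩
end
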